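/- arXiv:0707.2333 — 8 statements merged into one kernel-verified Lean document; each statement's English description precedes it below -/
import Mathlib

section
/- For every noncrossing pair partition p of {1,...,2k}, the number of blocks of p ∨ m plus the number of blocks of p ∨ n equals k+1, where m = {{1,2},{3,4},...,{2k-1,2k}} and n = {{2,3},{4,5},...,{2k,1}} are the two canonical interval pair partitions and ∨ denotes the join (coarsest common refinement bound) in the partition lattice. -/
/-- A partition (as a setoid) of `Fin N` is a pair partition if every block has two elements. -/
def IsPairPartition {N : ℕ} (p : Setoid (Fin N)) : Prop :=
  ∀ c ∈ p.classes, c.ncard = 2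

/-- A partition of `Fin N` is noncrossing if there are no `p1 < q1 < p2 < q2` with
`p1 ~ p2`, `q1 ~ q2` but `p1 ≁ q1`. -/
def IsNoncrossing {N : ℕ} (p : Setoid (Fin N)) : Prop :=
  ¬ ∃ p1 q1 p2 q2 : Fin N, p1 < q1 ∧ q1 < p2 ∧ p2 < q2 ∧
      p.r p1 p2 ∧ p.r q1 q2 ∧ ¬ p.r p1 q1

/-- The pair partition `{{1,2},{3,4},…,{2k-1,2k}}` (0-indexed: `{0,1},{2,3},…`). -/
def mSetoid (k : ℕ) : Setoid (Fin (2 * k)) :=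
  Setoid.ker (fun i => i.val / 2)

/-- The cyclic pair partition `{{2,3},{4,5},…,{2k,1}}` (0-indexed: `{1,2},{3,4},…,{2k-1,0}`). -/
def nSetoid (k : ℕ) : Setoid (Fin (2 * k)) :=
  Setoid.ker (fun i => ((i.val + 1) / 2) % k)

/-!
Rotating the points by one step swaps `m` and `n`, so `|p ∨ m| + |p ∨ n|` is invariant under
rotation. A block `{a, b}` of `p` with `b - a` minimal consists of neighbours: otherwise the
partner of `a + 1` lies strictly between `a` and `b` by noncrossingness. Rotate such a block to
`{0, 1}` and delete it. In `p ∨ m` the block `{0, 1}` is a class of its own, so one class is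
lost; in `p ∨ n` the points `0, 1` only glue the `n`-neighbours `2k + 1` and `2`, which is
exactly the wrapping block `{2k - 1, 0}` of the smaller `n`, so no class is lost. Hence the sum
drops by one, and induction on `k` starts at `k = 1`, where `m = n = ⊤`.
-/

namespace Setoid

variable {α β : Type*}

lemma ncard_classes (s : Setoid α) : s.classes.ncard = Nat.card (Quotient s) :=
  (Nat.card_coe_set_eq _).symm.trans (Nat.card_congr (quotientEquivClasses s)).symm

lemma natCard_quotient_top [Nonempty α] : Nat.card (Quotient (⊤ : Setoid α)) = 1 := by
  have : Subsingleton (Quotient (⊤ : Setoid α)) :=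
    ⟨fun a b => Quotient.inductionOn₂ a b fun _ _ => Quotient.sound trivial⟩
  exact Nat.card_eq_one_iff_unique.mpr ⟨this, ⟨⟦Classical.arbitrary α⟧⟩⟩

lemma comap_mono {f : α → β} {s t : Setoid β} (h : s ≤ t) : s.comap f ≤ t.comap f :=
  fun _ _ hxy => h hxy

lemma comap_equiv_sup (e : α ≃ β) (s t : Setoid β) :
    (s ⊔ t).comap e = s.comap e ⊔ t.comap e := by
  refine le_antisymm ?_ (sup_le (comap_mono le_sup_left) (comap_mono le_sup_right))
  have h : s ⊔ t ≤ (s.comap e ⊔ t.comap e).comap e.symm := by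
    refine sup_le (fun x y hxy => ?_) (fun x y hxy => ?_)
    · exact (le_sup_left : s.comap e ≤ _) (show s (e (e.symm x)) (e (e.symm y)) by simpa)
    · exact (le_sup_right : t.comap e ≤ _) (show t (e (e.symm x)) (e (e.symm y)) by simpa)
  intro x y hxy
  have := h hxy
  rwa [comap_rel, e.symm_apply_apply, e.symm_apply_apply] at this

lemma comap_le_of_le_comap {f : α → β} {g : β → α} (hgf : Function.LeftInverse g f)
    {s : Setoid β} {t : Setoid α} (h : s ≤ t.comap g) : s.comap f ≤ t := fun a b hab => by
  simpa only [comap_rel, hgf a, hgf b] using h hab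

lemma natCard_quotient_comap_equiv (e : α ≃ β) (s : Setoid β) :
    Nat.card (Quotient (s.comap e)) = Nat.card (Quotient s) :=
  Nat.card_congr (Quotient.congr e fun _ _ => Iff.rfl)

lemma natCard_quotient_comap_of_forall_rel {f : α → β} {s : Setoid β}
    (h : ∀ y, ∃ x, s y (f x)) : Nat.card (Quotient (s.comap f)) = Nat.card (Quotient s) := by
  rw [Nat.card_congr (comapQuotientEquiv f s), Set.range_eq_univ.mpr, Nat.card_univ]
  rintro ⟨y⟩
  obtain ⟨x, hx⟩ := h y
  exact ⟨x, (Quotient.sound hx).symm⟩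

lemma natCard_quotient_eq_comap_add_one [Finite β] {f : α → β} {s : Setoid β} {y₀ : β}
    (h : ∀ y, s y y₀ ↔ y ∉ Set.range f) :
    Nat.card (Quotient s) = Nat.card (Quotient (s.comap f)) + 1 := by
  have hrange : Set.range (Quotient.mk'' ∘ f) = {c : Quotient s | c ≠ ⟦y₀⟧} := by
    ext c
    induction c using Quotient.inductionOn with | h y =>
    simp only [Set.mem_range, Function.comp_apply, Set.mem_ofPred_eq, ne_eq, Quotient.eq,
      Quotient.mk''_eq_mk, h, not_not]
    constructor
    · rintro ⟨x, hx⟩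
      by_contra hy
      exact (h (f x)).mp (s.trans hx ((h y).mpr (by simpa using hy))) ⟨x, rfl⟩
    · rintro ⟨x, rfl⟩
      exact ⟨x, s.refl _⟩
  classical
  rw [Nat.card_congr (comapQuotientEquiv f s), hrange]
  exact (Nat.card_congr (Equiv.optionSubtypeNe _)).symm.trans Finite.card_option

end Setoid

lemma Fin.val_finRotate_cases {N : ℕ} (i : Fin N) :
    i.val + 1 < N ∧ (finRotate N i).val = i.val + 1 ∨
      i.val + 1 = N ∧ (finRotate N i).val = 0 := by
  cases N with
  | zero => exact i.elim0
  | succ n =>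
    rw [coe_finRotate]
    split_ifs with h <;> rw [Fin.ext_iff, Fin.val_last] at h <;> omega

namespace IsPairPartition

variable {N M : ℕ} {p : Setoid (Fin N)}

lemma eq_of_rel (hp : IsPairPartition p) {a b c : Fin N} (hab : p a b) (hac : p a c)
    (hb : b ≠ a) (hc : c ≠ a) : b = c := by
  by_contra hbc
  have hsub : {a, b, c} ⊆ {x | p x a} := by
    rintro x (rfl | rfl | rfl)
    exacts [p.refl _, p.symm hab, p.symm hac]
  have := Set.ncard_le_ncard hsub
  rw [Set.ncard_eq_three.mpr ⟨a, b, c, hb.symm, hc.symm, hbc, rfl⟩, hp _ ⟨a, rfl⟩] at this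
  omega

lemma exists_ne_rel (hp : IsPairPartition p) (a : Fin N) : ∃ b, b ≠ a ∧ p a b := by
  by_contra! h
  have hsub : {x | p x a} ⊆ {a} := fun x hx => by_contra fun hxa => h x hxa (p.symm hx)
  have := Set.ncard_le_ncard hsub
  rw [hp _ ⟨a, rfl⟩, Set.ncard_singleton] at this
  omega

lemma comap (hp : IsPairPartition p) {f : Fin M → Fin N} (hf : Function.Injective f)
    (hrange : ∀ a y, p y (f a) → y ∈ Set.range f) : IsPairPartition (p.comap f) := by
  rintro _ ⟨a, rfl⟩
  exact (Set.ncard_preimage_of_injective_subset_range hf (hrange a)).trans (hp _ ⟨f a, rfl⟩)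

lemma comap_equiv (hp : IsPairPartition p) (e : Fin M ≃ Fin N) :
    IsPairPartition (p.comap e) :=
  hp.comap e.injective fun _ y _ => e.surjective y

end IsPairPartition

namespace IsNoncrossing

variable {N M : ℕ} {p : Setoid (Fin N)}

lemma comap_of_strictMono (hnc : IsNoncrossing p) {f : Fin M → Fin N} (hf : StrictMono f) :
    IsNoncrossing (p.comap f) := by
  rintro ⟨a, b, c, d, hab, hbc, hcd, hac, hbd, hnab⟩
  exact hnc ⟨f a, f b, f c, f d, hf hab, hf hbc, hf hcd, hac, hbd, hnab⟩

lemma comap_finRotate (hnc : IsNoncrossing p) : IsNoncrossing (p.comap (finRotate N)) := by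
  rintro ⟨a, b, c, d, hab, hbc, hcd, hac, hbd, hnab⟩
  simp only [Fin.lt_def] at hab hbc hcd
  have := d.isLt
  have ha := Fin.val_finRotate_cases a
  have hb := Fin.val_finRotate_cases b
  have hc := Fin.val_finRotate_cases c
  have hd := Fin.val_finRotate_cases d
  by_cases hdN : d.val + 1 = N
  · -- the rotation wraps `d` around to `0`, turning the crossing `a b c d` into `d a b c`
    refine hnc ⟨_, _, _, _, ?_, ?_, ?_, p.symm hbd, hac,
      fun hda => hnab (p.trans (p.symm hda) (p.symm hbd))⟩ <;> rw [Fin.lt_def] <;> omega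
  · exact hnc ⟨_, _, _, _, Fin.lt_def.mpr (by omega), Fin.lt_def.mpr (by omega),
      Fin.lt_def.mpr (by omega), hac, hbd, hnab⟩

end IsNoncrossing

theorem IsPairPartition.exists_adjacent_of_rel {N : ℕ} {p : Setoid (Fin N)}
    (hp : IsPairPartition p) (hnc : IsNoncrossing p) {a b : Fin N} (hab : a < b) (h : p a b) :
    ∃ c d : Fin N, d.val = c.val + 1 ∧ p c d := by
  rw [Fin.lt_def] at hab
  by_cases hadj : b.val = a.val + 1
  · exact ⟨a, b, hadj, h⟩
  obtain ⟨c, hcv⟩ : ∃ c : Fin N, c.val = a.val + 1 := ⟨⟨a.val + 1, by omega⟩, rfl⟩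
  obtain ⟨e, hec, hce⟩ := hp.exists_ne_rel c
  have hca : c ≠ a := Fin.ne_of_val_ne (by omega)
  have hba : b ≠ a := Fin.ne_of_val_ne (by omega)
  have hcb : c ≠ b := Fin.ne_of_val_ne (by omega)
  have hea : e ≠ a := by
    rintro rfl
    exact hcb (hp.eq_of_rel (p.symm hce) h hca hba)
  have heb : e ≠ b := by
    rintro rfl
    exact hca (hp.eq_of_rel (p.symm hce) (p.symm h) hcb hba.symm)
  have hec' := Fin.val_injective.ne hec
  rcases lt_or_gt_of_ne (Fin.val_injective.ne hea) with hlt | hgt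
  · exact absurd ⟨e, a, c, b, Fin.lt_def.mpr hlt, Fin.lt_def.mpr (by omega),
      Fin.lt_def.mpr (by omega), p.symm hce, h,
      fun hea' => hca (hp.eq_of_rel hea' (p.symm hce) hea.symm hec.symm).symm⟩ hnc
  rcases lt_or_gt_of_ne (Fin.val_injective.ne heb) with hlt' | hgt'
  · exact hp.exists_adjacent_of_rel hnc (a := c) (b := e) (Fin.lt_def.mpr (by omega)) hce
  · exact absurd ⟨a, c, b, e, Fin.lt_def.mpr (by omega), Fin.lt_def.mpr (by omega),
      Fin.lt_def.mpr hgt', h, hce, fun hac => hcb (hp.eq_of_rel hac h hca hba)⟩ hnc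
termination_by b.val - a.val
decreasing_by omega

section JoinBlockSum

variable {k : ℕ}

lemma mSetoid_rel_iff {a b : Fin (2 * k)} : mSetoid k a b ↔ a.val / 2 = b.val / 2 :=
  Iff.rfl

lemma nSetoid_rel_iff {a b : Fin (2 * k)} :
    nSetoid k a b ↔ (a.val + 1) / 2 = (b.val + 1) / 2 ∨
      a.val = 0 ∧ b.val + 1 = 2 * k ∨ a.val + 1 = 2 * k ∧ b.val = 0 := by
  have hmod : ∀ c : Fin (2 * k), c.val + 1 < 2 * k ∧ (c.val + 1) / 2 % k = (c.val + 1) / 2 ∨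
      c.val + 1 = 2 * k ∧ (c.val + 1) / 2 % k = 0 := fun c => by
    have := c.isLt
    by_cases h : c.val + 1 = 2 * k
    · exact Or.inr ⟨h, by rw [show (c.val + 1) / 2 = k by omega, Nat.mod_self]⟩
    · exact Or.inl ⟨by omega, Nat.mod_eq_of_lt (by omega)⟩
  change (a.val + 1) / 2 % k = (b.val + 1) / 2 % k ↔ _
  have ha := hmod a
  have hb := hmod b
  generalize (a.val + 1) / 2 % k = u at *
  generalize (b.val + 1) / 2 % k = v at *
  omega

lemma comap_finRotate_mSetoid : (mSetoid k).comap (finRotate _) = nSetoid k := by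
  ext a b
  have := Fin.val_finRotate_cases a
  have := Fin.val_finRotate_cases b
  rw [Setoid.comap_rel, mSetoid_rel_iff, nSetoid_rel_iff]
  omega

lemma comap_finRotate_nSetoid : (nSetoid k).comap (finRotate _) = mSetoid k := by
  ext a b
  have := Fin.val_finRotate_cases a
  have := Fin.val_finRotate_cases b
  rw [Setoid.comap_rel, mSetoid_rel_iff, nSetoid_rel_iff]
  omega

noncomputable def joinBlockSum (p : Setoid (Fin (2 * k))) : ℕ :=
  Nat.card (Quotient (p ⊔ mSetoid k)) + Nat.card (Quotient (p ⊔ nSetoid k))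

lemma joinBlockSum_comap_finRotate (p : Setoid (Fin (2 * k))) :
    joinBlockSum (p.comap (finRotate _)) = joinBlockSum p := by
  have hm : p.comap (finRotate _) ⊔ mSetoid k = (p ⊔ nSetoid k).comap (finRotate _) := by
    rw [Setoid.comap_equiv_sup, comap_finRotate_nSetoid]
  have hn : p.comap (finRotate _) ⊔ nSetoid k = (p ⊔ mSetoid k).comap (finRotate _) := by
    rw [Setoid.comap_equiv_sup, comap_finRotate_mSetoid]
  rw [joinBlockSum, joinBlockSum, hm, hn, Setoid.natCard_quotient_comap_equiv,
    Setoid.natCard_quotient_comap_equiv, add_comm]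

lemma exists_rotation_rel_zero_one (p : Setoid (Fin (2 * k))) (hp : IsPairPartition p)
    (hnc : IsNoncrossing p) (a : ℕ) (ha : a + 1 < 2 * k) (h : p ⟨a, by omega⟩ ⟨a + 1, ha⟩) :
    ∃ q : Setoid (Fin (2 * k)), IsPairPartition q ∧ IsNoncrossing q ∧
      q ⟨0, by omega⟩ ⟨1, by omega⟩ ∧ joinBlockSum q = joinBlockSum p := by
  induction a generalizing p with
  | zero => exact ⟨p, hp, hnc, h, rfl⟩
  | succ a ih =>
    have hrot : ∀ i : Fin (2 * k), i.val = a ∨ i.val = a + 1 →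
        (finRotate _ i).val = i.val + 1 := fun i hi => by
      have := Fin.val_finRotate_cases i
      omega
    obtain ⟨q, hq, hqnc, hq01, hqsum⟩ := ih (p.comap (finRotate _)) (hp.comap_equiv _)
      hnc.comap_finRotate (by omega) (by
        rw [Setoid.comap_rel]
        convert h using 1 <;> exact Fin.ext (hrot _ (by simp)))
    exact ⟨q, hq, hqnc, hq01, hqsum.trans (joinBlockSum_comap_finRotate p)⟩

end JoinBlockSum

section Deletion

variable {k : ℕ} {p : Setoid (Fin (2 * (k + 1)))}

def shiftTwo (k : ℕ) : Fin (2 * k) → Fin (2 * (k + 1)) := (Fin.addNat · 2)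

@[simp] lemma val_shiftTwo (a : Fin (2 * k)) : (shiftTwo k a).val = a.val + 2 := rfl

lemma strictMono_shiftTwo : StrictMono (shiftTwo k) := Fin.strictMono_addNat 2

-- Truncated subtraction sends both points of the deleted block `{0, 1}` to `0`.
def dropTwo (hk : 0 < k) : Fin (2 * (k + 1)) → Fin (2 * k) := fun x => ⟨x.val - 2, by omega⟩

@[simp] lemma val_dropTwo (hk : 0 < k) (x : Fin (2 * (k + 1))) :
    (dropTwo hk x).val = x.val - 2 := rfl

lemma dropTwo_shiftTwo (hk : 0 < k) (a : Fin (2 * k)) : dropTwo hk (shiftTwo k a) = a :=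
  Fin.ext (by simp)

lemma shiftTwo_dropTwo (hk : 0 < k) {x : Fin (2 * (k + 1))} (hx : 2 ≤ x.val) :
    shiftTwo k (dropTwo hk x) = x :=
  Fin.ext (by simp; omega)

lemma IsPairPartition.lt_two_iff_of_rel (hp : IsPairPartition p)
    (h01 : p ⟨0, by omega⟩ ⟨1, by omega⟩) {x y : Fin (2 * (k + 1))} (hxy : p x y) :
    x.val < 2 ↔ y.val < 2 := by
  have key : ∀ x y : Fin (2 * (k + 1)), p x y → x.val < 2 → y.val < 2 := by
    intro x y hxy hx
    have h0x : p ⟨0, by omega⟩ x := by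
      rcases (by omega : x.val = 0 ∨ x.val = 1) with h | h
      · exact (Fin.ext h : x = ⟨0, by omega⟩) ▸ p.refl _
      · exact (Fin.ext h : x = ⟨1, by omega⟩) ▸ h01
    by_contra hy
    have hy1 := hp.eq_of_rel (p.trans h0x hxy) h01 (Fin.ne_of_val_ne (show y.val ≠ 0 by omega))
      (Fin.ne_of_val_ne (show 1 ≠ 0 by omega))
    exact hy (by rw [hy1]; exact Nat.one_lt_two)
  exact ⟨key x y hxy, key y x (p.symm hxy)⟩

lemma mem_range_shiftTwo_iff {x : Fin (2 * (k + 1))} : x ∈ Set.range (shiftTwo k) ↔ 2 ≤ x.val :=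
  ⟨fun ⟨a, ha⟩ => ha ▸ by simp, fun hx => ⟨⟨x.val - 2, by omega⟩, Fin.ext (by simp; omega)⟩⟩

lemma IsPairPartition.comap_shiftTwo (hp : IsPairPartition p)
    (h01 : p ⟨0, by omega⟩ ⟨1, by omega⟩) : IsPairPartition (p.comap (shiftTwo k)) :=
  hp.comap strictMono_shiftTwo.injective fun a y hy => by
    have := hp.lt_two_iff_of_rel h01 hy
    rw [val_shiftTwo] at this
    exact mem_range_shiftTwo_iff.mpr (by omega)

lemma le_comap_dropTwo (hk : 0 < k) (hp : IsPairPartition p)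
    (h01 : p ⟨0, by omega⟩ ⟨1, by omega⟩) {t : Setoid (Fin (2 * k))}
    (ht : p.comap (shiftTwo k) ≤ t) : p ≤ t.comap (dropTwo hk) := by
  intro x y hxy
  by_cases hx : x.val < 2
  · have hy := (hp.lt_two_iff_of_rel h01 hxy).mp hx
    rw [Setoid.comap_rel, show dropTwo hk x = dropTwo hk y from Fin.ext (by simp; omega)]
  · have hy : ¬ y.val < 2 := by rwa [← hp.lt_two_iff_of_rel h01 hxy]
    apply ht
    rwa [Setoid.comap_rel, shiftTwo_dropTwo hk (by omega), shiftTwo_dropTwo hk (by omega)]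

lemma comap_shiftTwo_sup_mSetoid (hk : 0 < k) (hp : IsPairPartition p)
    (h01 : p ⟨0, by omega⟩ ⟨1, by omega⟩) :
    (p ⊔ mSetoid (k + 1)).comap (shiftTwo k) = p.comap (shiftTwo k) ⊔ mSetoid k := by
  refine le_antisymm (Setoid.comap_le_of_le_comap (dropTwo_shiftTwo hk) ?_)
    (sup_le (Setoid.comap_mono le_sup_left) fun a b hab => ?_)
  · refine sup_le (le_comap_dropTwo hk hp h01 le_sup_left) fun x y hxy => ?_
    refine (le_sup_right : mSetoid k ≤ _) ?_
    rw [mSetoid_rel_iff] at hxy ⊢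
    simp only [val_dropTwo]
    omega
  · refine (le_sup_right : mSetoid (k + 1) ≤ _) ?_
    rw [mSetoid_rel_iff] at hab ⊢
    simp only [val_shiftTwo]
    omega

lemma comap_shiftTwo_sup_nSetoid (hk : 0 < k) (hp : IsPairPartition p)
    (h01 : p ⟨0, by omega⟩ ⟨1, by omega⟩) :
    (p ⊔ nSetoid (k + 1)).comap (shiftTwo k) = p.comap (shiftTwo k) ⊔ nSetoid k := by
  refine le_antisymm (Setoid.comap_le_of_le_comap (dropTwo_shiftTwo hk) ?_)
    (sup_le (Setoid.comap_mono le_sup_left) fun a b hab => ?_)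
  · refine sup_le (le_comap_dropTwo hk hp h01 le_sup_left) fun x y hxy => ?_
    refine (le_sup_right : nSetoid k ≤ _) ?_
    have := val_dropTwo hk x
    have := val_dropTwo hk y
    rw [nSetoid_rel_iff] at hxy ⊢
    omega
  · set s := p ⊔ nSetoid (k + 1)
    have hn : ∀ {x y}, nSetoid (k + 1) x y → s x y := fun h => (le_sup_right : _ ≤ s) h
    by_cases h : nSetoid (k + 1) (shiftTwo k a) (shiftTwo k b)
    · exact hn h
    have h21 : nSetoid (k + 1) ⟨2, by omega⟩ ⟨1, by omega⟩ :=
      nSetoid_rel_iff.mpr (by dsimp only; omega)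
    have h0last : nSetoid (k + 1) ⟨0, by omega⟩ ⟨2 * k + 1, by omega⟩ :=
      nSetoid_rel_iff.mpr (by dsimp only; omega)
    -- the `nSetoid k`-block `{2k-1, 0}` is reassembled as `2 ~ 1 ~ 0 ~ 2k+1` through `p`
    have hwrap : ∀ x y : Fin (2 * (k + 1)), x.val = 2 → y.val = 2 * k + 1 → s x y := by
      rintro ⟨x, hx⟩ ⟨y, hy⟩ (rfl : x = 2) (rfl : y = 2 * k + 1)
      exact s.trans (hn h21) (s.trans ((le_sup_left : p ≤ s) (p.symm h01)) (hn h0last))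
    have := val_shiftTwo a
    have := val_shiftTwo b
    rw [nSetoid_rel_iff] at hab h
    have hab' : (a.val = 0 ∧ b.val + 1 = 2 * k) ∨ (a.val + 1 = 2 * k ∧ b.val = 0) := by
      omega
    rcases hab' with ⟨ha0, hb1⟩ | ⟨ha1, hb0⟩
    · exact hwrap _ _ (by omega) (by omega)
    · exact s.symm (hwrap _ _ (by omega) (by omega))

lemma exists_nSetoid_rel_shiftTwo (hk : 0 < k) (x : Fin (2 * (k + 1))) :
    ∃ a, nSetoid (k + 1) x (shiftTwo k a) := by
  by_cases hx : x.val = 0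
  · refine ⟨⟨2 * k - 1, by omega⟩, nSetoid_rel_iff.mpr ?_⟩
    simp only [val_shiftTwo]
    omega
  · refine ⟨dropTwo hk x, nSetoid_rel_iff.mpr ?_⟩
    simp only [val_shiftTwo, val_dropTwo]
    omega

lemma natCard_sup_mSetoid_succ (hk : 0 < k) (hp : IsPairPartition p)
    (h01 : p ⟨0, by omega⟩ ⟨1, by omega⟩) :
    Nat.card (Quotient (p ⊔ mSetoid (k + 1))) =
      Nat.card (Quotient (p.comap (shiftTwo k) ⊔ mSetoid k)) + 1 := by
  rw [← comap_shiftTwo_sup_mSetoid hk hp h01]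
  refine Setoid.natCard_quotient_eq_comap_add_one (y₀ := ⟨0, by omega⟩) fun y => ?_
  have hlt : p ⊔ mSetoid (k + 1) ≤ Setoid.ker fun x : Fin (2 * (k + 1)) => x.val < 2 :=
    sup_le (fun x y hxy => propext (hp.lt_two_iff_of_rel h01 hxy))
      fun x y hxy => propext (by rw [mSetoid_rel_iff] at hxy; omega)
  rw [mem_range_shiftTwo_iff, not_le]
  refine ⟨fun hy => by simpa using hlt hy, fun hy => ?_⟩
  exact (le_sup_right : mSetoid (k + 1) ≤ _) (by rw [mSetoid_rel_iff]; simp; omega)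

lemma natCard_sup_nSetoid_succ (hk : 0 < k) (hp : IsPairPartition p)
    (h01 : p ⟨0, by omega⟩ ⟨1, by omega⟩) :
    Nat.card (Quotient (p ⊔ nSetoid (k + 1))) =
      Nat.card (Quotient (p.comap (shiftTwo k) ⊔ nSetoid k)) := by
  rw [← comap_shiftTwo_sup_nSetoid hk hp h01]
  refine (Setoid.natCard_quotient_comap_of_forall_rel fun y => ?_).symm
  obtain ⟨a, ha⟩ := exists_nSetoid_rel_shiftTwo hk y
  exact ⟨a, (le_sup_right : nSetoid (k + 1) ≤ _) ha⟩

lemma joinBlockSum_eq_comap_shiftTwo_add_one (hk : 0 < k) (hp : IsPairPartition p)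
    (h01 : p ⟨0, by omega⟩ ⟨1, by omega⟩) :
    joinBlockSum p = joinBlockSum (p.comap (shiftTwo k)) + 1 := by
  rw [joinBlockSum, joinBlockSum, natCard_sup_mSetoid_succ hk hp h01,
    natCard_sup_nSetoid_succ hk hp h01]
  omega

end Deletion

lemma joinBlockSum_one (p : Setoid (Fin (2 * 1))) : joinBlockSum p = 2 := by
  have hm : mSetoid 1 = ⊤ := Setoid.eq_top_iff.mpr fun x y => by
    have := x.isLt
    have := y.isLt
    rw [mSetoid_rel_iff]
    omega
  have hn : nSetoid 1 = ⊤ := Setoid.eq_top_iff.mpr fun x y => by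
    have := x.isLt
    have := y.isLt
    rw [nSetoid_rel_iff]
    omega
  have : Nonempty (Fin (2 * 1)) := ⟨0⟩
  rw [joinBlockSum, hm, hn, sup_top_eq, Setoid.natCard_quotient_top]

theorem joinBlockSum_eq_of_isNoncrossing {k : ℕ} (hk : 1 ≤ k) (p : Setoid (Fin (2 * k)))
    (hp : IsPairPartition p) (hnc : IsNoncrossing p) : joinBlockSum p = k + 1 := by
  induction k, hk using Nat.le_induction with
  | base => exact joinBlockSum_one p
  | succ k hk ih =>
    obtain ⟨b, hb0, h0b⟩ := hp.exists_ne_rel ⟨0, by omega⟩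
    obtain ⟨⟨a, ha⟩, ⟨_, _⟩, rfl, hab⟩ :=
      hp.exists_adjacent_of_rel hnc (Fin.pos_iff_ne_zero.mpr hb0) h0b
    obtain ⟨q, hq, hqnc, hq01, hqsum⟩ := exists_rotation_rel_zero_one p hp hnc a _ hab
    rw [← hqsum, joinBlockSum_eq_comap_shiftTwo_add_one hk hq hq01,
      ih _ (hq.comap_shiftTwo hq01) (hqnc.comap_of_strictMono strictMono_shiftTwo)]

/-- For every noncrossing pair partition `p` of `{1,…,2k}`,
`|p ∨ m| + |p ∨ n| = k + 1`. -/
theorem block_count_join_m_add_join_n (k : ℕ) (hk : 1 ≤ k) (p : Setoid (Fin (2 * k)))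
    (hpair : IsPairPartition p) (hnc : IsNoncrossing p) :
    (p ⊔ mSetoid k).classes.ncard + (p ⊔ nSetoid k).classes.ncard = k + 1 := by
  rw [Setoid.ncard_classes, Setoid.ncard_classes]
  exact joinBlockSum_eq_of_isNoncrossing hk p hpair hnc
end

section
/- For each j with 1 ≤ j ≤ k, the number of noncrossing pair partitions p of {1,...,2k} with |p ∨ m| = j equals the number of noncrossing partitions of {1,...,k} with exactly j blocks, where m = {{1,2},{3,4},...,{2k-1,2k}}. Moreover the map p ↦ p ∨ m is a bijection from noncrossing pair partitions of {1,...,2k} onto noncrossing partitions of {1,...,2k} all of whose blocks are unions of blocks of m (identified with noncrossing partitions of {1,...,k}). -/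
/-!
Write `lo a = 2a` and `hi a = 2a + 1` for the points of the `a`-th block of `m`. The partitions
above `m` are the pullbacks of partitions of `Fin k` along `blk : x ↦ x / 2`, and pulling back
preserves noncrossingness and the number of blocks.

For a partition `r` of `Fin k`, let `next a` be the cyclic successor of `a` inside its block.
The pair partition joining `hi a` to `lo (next a)` for every `a` is noncrossing when `r` is, and
its join with `m` is the pullback of `r`. Conversely, a noncrossing pair partition `p` has this
form, with `r` the partition that `p ⊔ m` induces on `Fin k`: the points strictly between two
partners are matched among themselves, so the partner of `hi a` is some `lo b`, and the interval
cut out by `{hi a, lo b}` is a union of blocks of `m` that `p` does not cut, which forces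
`b = next a`.
-/

open Function Set

theorem Finset.even_card_of_involution {ι : Type*} (s : Finset ι) (g : ι → ι)
    (hg_mem : ∀ a ∈ s, g a ∈ s) (hg_ne : ∀ a ∈ s, g a ≠ a) (hg_inv : ∀ a ∈ s, g (g a) = a) :
    Even s.card := by
  rw [← ZMod.natCast_eq_zero_iff_even, Finset.card_eq_sum_ones, Nat.cast_sum, Nat.cast_one]
  exact Finset.sum_involution (fun a _ => g a) (fun _ _ => by decide)
    (fun a ha _ => hg_ne a ha) hg_mem hg_inv

namespace Setoid

section Comap

variable {α β : Type*}

theorem comap_comap_of_ker_le {f : α → β} {g : β → α} (hfg : LeftInverse f g) {q : Setoid α}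
    (hq : ker f ≤ q) : (q.comap g).comap f = q := by
  ext x y
  have hx : q x (g (f x)) := hq (hfg (f x)).symm
  have hy : q y (g (f y)) := hq (hfg (f y)).symm
  simp only [comap_rel]
  exact ⟨fun h => q.trans' hx (q.trans' h (q.symm' hy)),
    fun h => q.trans' (q.symm' hx) (q.trans' h hy)⟩

theorem classes_comap {f : α → β} (hf : Surjective f) (r : Setoid β) :
    (r.comap f).classes = preimage f '' r.classes := by
  ext c
  constructor
  · rintro ⟨x, rfl⟩
    exact ⟨_, r.mem_classes (f x), rfl⟩
  · rintro ⟨_, ⟨b, rfl⟩, rfl⟩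
    obtain ⟨x, rfl⟩ := hf b
    exact ⟨x, rfl⟩

theorem ncard_classes_comap {f : α → β} (hf : Surjective f) (r : Setoid β) :
    (r.comap f).classes.ncard = r.classes.ncard := by
  rw [classes_comap hf]
  exact ncard_image_of_injective _ (preimage_injective.2 hf)

theorem le_ker_mem {s : Setoid α} {S : Set α} (h : ∀ x y, s x y → x ∈ S → y ∈ S) :
    s ≤ ker (· ∈ S) :=
  fun x y hxy => propext ⟨h x y hxy, h y x (s.symm' hxy)⟩

theorem ker_le_comap (f : α → β) (r : Setoid β) : ker f ≤ r.comap f :=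
  fun x _ h => (comap_rel f r _ _).2 (ker_def.1 h ▸ r.refl' (f x))

theorem ker_le_ker_comp (f : α → β) {γ : Type*} (g : β → γ) : ker f ≤ ker (g ∘ f) :=
  fun _ _ h => congrArg g h

end Comap

section NextInClass

variable {α : Type*} [LinearOrder α] [WellFoundedLT α] (r : Setoid α)

open Classical in
noncomputable def nextInClass (a : α) : α :=
  if h : ∃ b, r a b ∧ a < b then wellFounded_lt.min {b | r a b ∧ a < b} h
  else wellFounded_lt.min {b | r a b} ⟨a, r.refl' a⟩

variable {r} {a b : α}

theorem rel_nextInClass (a : α) : r a (r.nextInClass a) := by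
  unfold nextInClass
  split_ifs with h
  · exact (wellFounded_lt.min_mem _ h).1
  · exact wellFounded_lt.min_mem {b | r a b} _

theorem nextInClass_le (hab : r a b) (hlt : a < b) : r.nextInClass a ≤ b := by
  have h : ∃ b, r a b ∧ a < b := ⟨b, hab, hlt⟩
  rw [nextInClass, dif_pos h]
  exact not_lt.1 (wellFounded_lt.not_lt_min {b | r a b ∧ a < b} (x := b) ⟨hab, hlt⟩)

theorem lt_nextInClass (hab : r a b) (hlt : a < b) : a < r.nextInClass a := by
  have h : ∃ b, r a b ∧ a < b := ⟨b, hab, hlt⟩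
  rw [nextInClass, dif_pos h]
  exact (wellFounded_lt.min_mem _ h).2

theorem isGreatest_of_nextInClass_le (h : r.nextInClass a ≤ a) : IsGreatest {b | r a b} a :=
  ⟨r.refl' a, fun _ hab => not_lt.1 fun hlt => (lt_nextInClass hab hlt).not_ge h⟩

theorem isLeast_of_nextInClass_le (h : r.nextInClass a ≤ a) :
    IsLeast {b | r a b} (r.nextInClass a) := by
  refine ⟨rel_nextInClass a, fun b hab => ?_⟩
  have hn : ¬ ∃ b, r a b ∧ a < b := fun ⟨_, hc, hlt⟩ =>
    hlt.not_ge ((isGreatest_of_nextInClass_le h).2 hc)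
  rw [nextInClass, dif_neg hn]
  exact not_lt.1 (wellFounded_lt.not_lt_min {b | r a b} hab)

theorem nextInClass_eq_of_lt (hab : r a b) (hlt : a < b) (hgap : ∀ c, r a c → c ∉ Ioo a b) :
    r.nextInClass a = b :=
  le_antisymm (nextInClass_le hab hlt)
    (not_lt.1 fun h => hgap _ (rel_nextInClass a) ⟨lt_nextInClass hab hlt, h⟩)

theorem nextInClass_eq_of_subset_Icc (hab : r a b) (hcls : ∀ c, r a c → c ∈ Icc b a) :
    r.nextInClass a = b :=
  le_antisymm ((isLeast_of_nextInClass_le (hcls _ (rel_nextInClass a)).2).2 hab)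
    (hcls _ (rel_nextInClass a)).1

theorem nextInClass_injective : Injective r.nextInClass := by
  intro a b hab
  by_contra hne
  wlog hlt : a < b generalizing a b
  · exact this hab.symm (Ne.symm hne) ((not_lt.1 hlt).lt_of_ne (Ne.symm hne))
  have hrab : r a b := r.trans' (rel_nextInClass a) (hab ▸ r.symm' (rel_nextInClass b))
  have hwrap : r.nextInClass b ≤ b := hab ▸ nextInClass_le hrab hlt
  have hle : r.nextInClass a ≤ a := hab ▸ (isLeast_of_nextInClass_le hwrap).2 (r.symm' hrab)
  exact (lt_nextInClass hrab hlt).not_ge hle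

variable [Finite α]

variable (r) in
noncomputable def nextPerm : Equiv.Perm α :=
  Equiv.ofBijective _ (Finite.injective_iff_bijective.1 (nextInClass_injective (r := r)))

@[simp] theorem nextPerm_apply (a : α) : r.nextPerm a = r.nextInClass a := rfl

theorem exists_lt_lt_nextInClass {w w' z : α} (hww' : r w w') (hz : z ∈ Ioo w w')
    (hwz : ¬ r w z) :
    ∃ s, r w s ∧ w ≤ s ∧ s < z ∧ z < r.nextInClass s ∧ r.nextInClass s ≤ w' := by
  obtain ⟨s, ⟨hws, hsz⟩, hmax⟩ :=
    exists_max_image {s | r w s ∧ s < z} id (toFinite _) ⟨w, r.refl' w, hz.1⟩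
  have hsw' : r s w' := r.trans' (r.symm' hws) hww'
  have hlt : s < w' := hsz.trans hz.2
  refine ⟨s, hws, hmax w ⟨r.refl' w, hz.1⟩, hsz, lt_of_not_ge fun h => ?_, nextInClass_le hsw' hlt⟩
  have hwn : r w (r.nextInClass s) := r.trans' hws (rel_nextInClass s)
  rcases h.lt_or_eq with h | h
  · exact (lt_nextInClass hsw' hlt).not_ge (hmax _ ⟨hwn, h⟩)
  · exact hwz (h ▸ hwn)

end NextInClass

end Setoid

open Setoid

namespace IsPairPartition

variable {N : ℕ} {p q : Setoid (Fin N)}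

theorem exists_partner (hp : IsPairPartition p) (x : Fin N) :
    ∃ y, y ≠ x ∧ ∀ z, p x z ↔ z = x ∨ z = y := by
  obtain ⟨u, v, huv, hc⟩ := ncard_eq_two.1 (hp _ (p.mem_classes x))
  have hmem : ∀ z, p x z ↔ z = u ∨ z = v := fun z => by
    rw [p.comm']
    exact Set.ext_iff.1 hc z
  rcases (hmem x).1 (p.refl' x) with rfl | rfl
  · exact ⟨v, huv.symm, hmem⟩
  · exact ⟨u, huv, fun z => (hmem z).trans or_comm⟩

noncomputable def partner (hp : IsPairPartition p) (x : Fin N) : Fin N :=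
  (hp.exists_partner x).choose

theorem partner_ne (hp : IsPairPartition p) (x : Fin N) : hp.partner x ≠ x :=
  (hp.exists_partner x).choose_spec.1

theorem rel_iff (hp : IsPairPartition p) {x z : Fin N} : p x z ↔ z = x ∨ z = hp.partner x :=
  (hp.exists_partner x).choose_spec.2 z

theorem rel_partner (hp : IsPairPartition p) (x : Fin N) : p x (hp.partner x) :=
  hp.rel_iff.2 (Or.inr rfl)

theorem eq_partner_of_rel (hp : IsPairPartition p) {x y : Fin N} (hxy : p x y) (hne : y ≠ x) :
    y = hp.partner x :=
  (hp.rel_iff.1 hxy).resolve_left hne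

theorem partner_partner (hp : IsPairPartition p) (x : Fin N) : hp.partner (hp.partner x) = x :=
  (hp.eq_partner_of_rel (p.symm' (hp.rel_partner x)) (hp.partner_ne x).symm).symm

theorem eq_of_le (hp : IsPairPartition p) (hq : IsPairPartition q) (h : p ≤ q) : p = q := by
  ext x y
  refine ⟨fun hxy => h hxy, fun hxy => ?_⟩
  have hcl : {z | p z x} = {z | q z x} :=
    eq_of_subset_of_ncard_le (fun z hz => h hz)
      (by rw [hp _ (p.mem_classes x), hq _ (q.mem_classes x)]) (toFinite _)
  exact p.symm' (hcl ▸ q.symm' hxy : y ∈ {z | p z x})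

end IsPairPartition

namespace IsNoncrossing

section Comap

variable {M N : ℕ}

theorem comap_of_strictMono_s2 {q : Setoid (Fin M)} (hq : IsNoncrossing q) {g : Fin N → Fin M}
    (hg : StrictMono g) : IsNoncrossing (q.comap g) :=
  fun ⟨_, _, _, _, h12, h23, h34, h13, h24, h12n⟩ =>
    hq ⟨_, _, _, _, hg h12, hg h23, hg h34, h13, h24, h12n⟩

theorem comap_of_monotone {r : Setoid (Fin M)} (hr : IsNoncrossing r) {f : Fin N → Fin M}
    (hf : Monotone f) : IsNoncrossing (r.comap f) := by
  rintro ⟨x₁, x₂, x₃, x₄, h12, h23, h34, h13, h24, h12n⟩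
  simp only [comap_rel] at h13 h24 h12n
  have s12 : f x₁ < f x₂ := (hf h12.le).lt_of_ne fun h => h12n (h ▸ r.refl' _)
  have s23 : f x₂ < f x₃ := (hf h23.le).lt_of_ne fun h => h12n (h ▸ h13)
  have s34 : f x₃ < f x₄ :=
    (hf h34.le).lt_of_ne fun h => h12n (r.trans' h13 (r.symm' (h ▸ h24)))
  exact hr ⟨_, _, _, _, s12, s23, s34, h13, h24, h12n⟩

end Comap

variable {N : ℕ} {p : Setoid (Fin N)}

theorem rel_mem_Ioo (hnc : IsNoncrossing p) (hp : IsPairPartition p) {x y z w : Fin N}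
    (hxy : p x y) (hlt : x < y) (hz : z ∈ Ioo x y) (hzw : p z w) : w ∈ Ioo x y := by
  have hy : y = hp.partner x := hp.eq_partner_of_rel hxy hlt.ne'
  have hxz : ¬ p x z := fun h => by
    rcases hp.rel_iff.1 h with rfl | rfl
    · exact hz.1.ne rfl
    · exact hz.2.ne hy.symm
  have hxw : ¬ p x w := fun h => hxz (p.trans' h (p.symm' hzw))
  rcases lt_trichotomy w x with hwx | rfl | hxw'
  · exact (hnc ⟨w, x, z, y, hwx, hz.1, hz.2, p.symm' hzw, hxy, fun h => hxw (p.symm' h)⟩).elim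
  · exact (hxw (p.refl' w)).elim
  rcases lt_trichotomy w y with hwy | rfl | hyw
  · exact ⟨hxw', hwy⟩
  · exact (hxw hxy).elim
  · exact (hnc ⟨x, z, y, w, hz.1, hz.2, hyw, hxy, hzw, hxz⟩).elim

theorem le_ker_mem_Ioo (hnc : IsNoncrossing p) (hp : IsPairPartition p) {x y : Fin N}
    (hxy : p x y) (hlt : x < y) : p ≤ ker (· ∈ Ioo x y) :=
  le_ker_mem fun _ _ hzw hz => hnc.rel_mem_Ioo hp hxy hlt hz hzw

theorem le_ker_mem_Icc (hnc : IsNoncrossing p) (hp : IsPairPartition p) {x y : Fin N}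
    (hxy : p x y) (hlt : x < y) : p ≤ ker (· ∈ Icc x y) := by
  have hends : ∀ w, p x w → w ∈ Icc x y := fun w hw => by
    rcases hp.rel_iff.1 hw with rfl | rfl
    · exact left_mem_Icc.2 hlt.le
    · rw [← hp.eq_partner_of_rel hxy hlt.ne']
      exact right_mem_Icc.2 hlt.le
  refine le_ker_mem fun z w hzw hz => ?_
  rcases eq_endpoints_or_mem_Ioo_of_mem_Icc hz with rfl | rfl | hz
  · exact hends w hzw
  · exact hends w (p.trans' hxy hzw)
  · exact Ioo_subset_Icc_self (hnc.rel_mem_Ioo hp hxy hlt hz hzw)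

theorem even_card_Ioo (hnc : IsNoncrossing p) (hp : IsPairPartition p) {x y : Fin N}
    (hxy : p x y) (hlt : x < y) : Even (Finset.Ioo x y).card :=
  Finset.even_card_of_involution _ hp.partner
    (fun z hz => by
      rw [Finset.mem_Ioo] at hz ⊢
      exact hnc.rel_mem_Ioo hp hxy hlt hz (hp.rel_partner z))
    (fun z _ => hp.partner_ne z) (fun z _ => hp.partner_partner z)

theorem val_mod_two_ne (hnc : IsNoncrossing p) (hp : IsPairPartition p) {x y : Fin N}
    (hxy : p x y) (hne : x ≠ y) : (x : ℕ) % 2 ≠ y % 2 := by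
  wlog hlt : x < y generalizing x y
  · exact (this (p.symm' hxy) hne.symm (lt_of_le_of_ne (not_lt.1 hlt) hne.symm)).symm
  obtain ⟨c, hc⟩ := hnc.even_card_Ioo hp hxy hlt
  rw [Fin.card_Ioo] at hc
  rw [Fin.lt_def] at hlt
  omega

end IsNoncrossing

namespace MBlock

variable {k : ℕ}

def blk (x : Fin (2 * k)) : Fin k := ⟨x / 2, by omega⟩

def lo (a : Fin k) : Fin (2 * k) := ⟨2 * a, by omega⟩

def hi (a : Fin k) : Fin (2 * k) := ⟨2 * a + 1, by omega⟩

@[simp] theorem blk_lo (a : Fin k) : blk (lo a) = a := Fin.ext (by simp [blk, lo])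

@[simp] theorem blk_hi (a : Fin k) : blk (hi a) = a := Fin.ext (by simp [blk, hi]; omega)

theorem lo_le_iff {a : Fin k} {x : Fin (2 * k)} : lo a ≤ x ↔ a ≤ blk x := by
  simp only [Fin.le_def, lo, blk]; omega

theorem le_hi_iff {a : Fin k} {x : Fin (2 * k)} : x ≤ hi a ↔ blk x ≤ a := by
  simp only [Fin.le_def, hi, blk]; omega

theorem hi_lt_iff {a : Fin k} {x : Fin (2 * k)} : hi a < x ↔ a < blk x := by
  simp only [← not_le, le_hi_iff]

theorem lt_lo_iff {a : Fin k} {x : Fin (2 * k)} : x < lo a ↔ blk x < a := by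
  simp only [← not_le, lo_le_iff]

theorem blk_surjective : Surjective (blk : Fin (2 * k) → Fin k) :=
  LeftInverse.surjective blk_lo

theorem lo_strictMono : StrictMono (lo : Fin k → Fin (2 * k)) := fun a b h => by
  simp only [Fin.lt_def, lo] at h ⊢; omega

theorem hi_strictMono : StrictMono (hi : Fin k → Fin (2 * k)) := fun a b h => by
  simp only [Fin.lt_def, hi] at h ⊢; omega

theorem blk_monotone : Monotone (blk : Fin (2 * k) → Fin k) := fun x y h => by
  simp only [Fin.le_def, blk] at h ⊢; omega

theorem lo_ne_hi (a b : Fin k) : lo a ≠ hi b := fun h => by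
  simp only [Fin.ext_iff, lo, hi] at h; omega

theorem hi_ne_lo (a b : Fin k) : hi a ≠ lo b := (lo_ne_hi b a).symm

theorem eq_lo_of_val_mod_two {x : Fin (2 * k)} (hx : (x : ℕ) % 2 = 0) : x = lo (blk x) :=
  Fin.ext (by simp only [lo, blk]; omega)

theorem eq_lo_or_eq_hi (x : Fin (2 * k)) : x = lo (blk x) ∨ x = hi (blk x) := by
  simp only [Fin.ext_iff, lo, hi, blk]; omega

theorem mSetoid_eq_ker : mSetoid k = ker blk := by
  ext x y
  rw [ker_def, Fin.ext_iff]
  rfl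

theorem preimage_blk_Icc (a b : Fin k) : blk ⁻¹' Icc a b = Icc (lo a) (hi b) := by
  ext x
  simp only [mem_preimage, mem_Icc, lo_le_iff, le_hi_iff]

theorem preimage_blk_Ioo (a b : Fin k) : blk ⁻¹' Ioo a b = Ioo (hi a) (lo b) := by
  ext x
  simp only [mem_preimage, mem_Ioo, hi_lt_iff, lt_lo_iff]

theorem comap_lo_comap_blk {q : Setoid (Fin (2 * k))} (hq : mSetoid k ≤ q) :
    (q.comap lo).comap blk = q :=
  comap_comap_of_ker_le blk_lo (mSetoid_eq_ker ▸ hq)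

theorem mSetoid_lo_hi (a : Fin k) : mSetoid k (lo a) (hi a) := by
  rw [mSetoid_eq_ker, ker_def, blk_lo, blk_hi]

theorem mSetoid_lo_blk (x : Fin (2 * k)) : mSetoid k (lo (blk x)) x := by
  rw [mSetoid_eq_ker, ker_def, blk_lo]

variable (σ : Equiv.Perm (Fin k))

def pairLabel (x : Fin (2 * k)) : Fin k :=
  if (x : ℕ) % 2 = 0 then σ.symm (blk x) else blk x

-- The blocks of `pairing σ` are the pairs `{hi a, lo (σ a)}`, labelled by `a`.
def pairing : Setoid (Fin (2 * k)) := ker (pairLabel σ)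

variable {σ}

theorem pairing_iff {x y : Fin (2 * k)} : pairing σ x y ↔ pairLabel σ x = pairLabel σ y :=
  Iff.rfl

@[simp] theorem pairLabel_lo (a : Fin k) : pairLabel σ (lo a) = σ.symm a := by
  rw [pairLabel, blk_lo, if_pos (by simp [lo])]

@[simp] theorem pairLabel_hi (a : Fin k) : pairLabel σ (hi a) = a := by
  rw [pairLabel, blk_hi, if_neg (by simp [hi, Nat.add_mod])]

theorem pairLabel_eq_iff {x : Fin (2 * k)} {c : Fin k} :
    pairLabel σ x = c ↔ x = hi c ∨ x = lo (σ c) := by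
  obtain ⟨b, rfl | rfl⟩ : ∃ b, x = lo b ∨ x = hi b := ⟨_, eq_lo_or_eq_hi x⟩
  · simp [Equiv.symm_apply_eq, lo_strictMono.injective.eq_iff, lo_ne_hi]
  · simp [hi_strictMono.injective.eq_iff, hi_ne_lo]

theorem pairing_hi_lo (a : Fin k) : pairing σ (hi a) (lo (σ a)) := by
  simp [pairing_iff]

theorem pairing_hi_hi {a b : Fin k} : pairing σ (hi a) (hi b) ↔ a = b := by
  simp [pairing_iff]

theorem pairing_le_iff {q : Setoid (Fin (2 * k))} :
    pairing σ ≤ q ↔ ∀ a, q (hi a) (lo (σ a)) := by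
  refine ⟨fun h a => h (pairing_hi_lo a), fun h x y hxy => ?_⟩
  obtain ⟨c, hxc, hyc⟩ : ∃ c, pairLabel σ x = c ∧ pairLabel σ y = c := ⟨_, rfl, hxy.symm⟩
  rcases pairLabel_eq_iff.1 hxc with rfl | rfl <;> rcases pairLabel_eq_iff.1 hyc with rfl | rfl
  exacts [q.refl' _, h _, q.symm' (h _), q.refl' _]

theorem isPairPartition_pairing : IsPairPartition (pairing σ) := by
  rintro _ ⟨x, rfl⟩
  have hcls : {y | pairing σ y x} = {hi (pairLabel σ x), lo (σ (pairLabel σ x))} := by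
    ext y
    exact pairLabel_eq_iff
  rw [hcls]
  exact ncard_pair (lo_ne_hi _ _).symm

theorem pairing_cases {x y : Fin (2 * k)} (h : pairing σ x y) (hlt : x < y) :
    ∃ a, (x = hi a ∧ y = lo (σ a) ∧ a < σ a) ∨ (x = lo (σ a) ∧ y = hi a ∧ σ a ≤ a) := by
  obtain ⟨c, hxc, hyc⟩ : ∃ c, pairLabel σ x = c ∧ pairLabel σ y = c := ⟨_, rfl, h.symm⟩
  refine ⟨c, ?_⟩
  rcases pairLabel_eq_iff.1 hxc with rfl | rfl <;> rcases pairLabel_eq_iff.1 hyc with rfl | rfl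
  · exact (hlt.ne rfl).elim
  · exact Or.inl ⟨rfl, rfl, by simpa [hi_lt_iff] using hlt⟩
  · exact Or.inr ⟨rfl, rfl, by simpa [lo_le_iff] using hlt.le⟩
  · exact (hlt.ne rfl).elim

variable {r : Setoid (Fin k)}

theorem pairing_nextPerm_le_comap : pairing r.nextPerm ≤ r.comap blk :=
  pairing_le_iff.2 fun a => by
    rw [comap_rel, blk_hi, blk_lo]
    exact rel_nextInClass a

theorem pairing_nextPerm_sup_mSetoid (r : Setoid (Fin k)) :
    pairing r.nextPerm ⊔ mSetoid k = r.comap blk := by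
  refine le_antisymm (sup_le pairing_nextPerm_le_comap (mSetoid_eq_ker ▸ ker_le_comap blk r)) ?_
  set J := pairing r.nextPerm ⊔ mSetoid k
  have hpJ : pairing r.nextPerm ≤ J := le_sup_left
  have hmJ : mSetoid k ≤ J := le_sup_right
  have hlo : ∀ a b, r a b → a ≤ b → J (lo a) (lo b) := by
    intro a
    induction a using WellFoundedGT.induction with
    | _ a ih =>
      intro b hab hle
      rcases hle.lt_or_eq with hlt | rfl
      · have hstep : J (lo a) (lo (r.nextInClass a)) :=
          J.trans' (hmJ (mSetoid_lo_hi a)) (hpJ (pairing_hi_lo a))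
        exact J.trans' hstep (ih _ (lt_nextInClass hab hlt) b
          (r.trans' (r.symm' (rel_nextInClass a)) hab) (nextInClass_le hab hlt))
      · exact J.refl' _
  intro x y hxy
  have hmid : J (lo (blk x)) (lo (blk y)) := by
    rcases le_total (blk x) (blk y) with hle | hle
    · exact hlo _ _ hxy hle
    · exact J.symm' (hlo _ _ (r.symm' hxy) hle)
  exact J.trans' (J.symm' (hmJ (mSetoid_lo_blk x)))
    (J.trans' hmid (hmJ (mSetoid_lo_blk y)))

theorem isNoncrossing_pairing_nextPerm (hr : IsNoncrossing r) :
    IsNoncrossing (pairing r.nextPerm) := by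
  rintro ⟨x₁, x₂, x₃, x₄, h12, h23, h34, h13, h24, -⟩
  have hb : r (blk x₂) (blk x₄) := pairing_nextPerm_le_comap h24
  obtain ⟨c, ⟨rfl, rfl, hc⟩ | ⟨rfl, rfl, hc⟩⟩ := pairing_cases h13 (h12.trans h23)
  · simp only [nextPerm_apply] at h23 h34 hc
    have h₁ : c < blk x₂ := hi_lt_iff.1 h12
    have h₂ : blk x₂ < r.nextInClass c := lt_lo_iff.1 h23
    have hcb : ¬ r c (blk x₂) := fun h => h₂.not_ge (nextInClass_le h h₁)
    have h₃ : r.nextInClass c < blk x₄ := (lo_le_iff.1 h34.le).lt_of_ne fun h =>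
      hcb (r.trans' (rel_nextInClass c) (r.symm' (h ▸ hb)))
    exact hr ⟨c, blk x₂, _, blk x₄, h₁, h₂, h₃, rel_nextInClass c, hb, hcb⟩
  · simp only [nextPerm_apply] at h12 hc
    have h₃ : c < blk x₄ := hi_lt_iff.1 h34
    have hcb : ¬ r c (blk x₂) := fun h =>
      h₃.not_ge ((isGreatest_of_nextInClass_le hc).2 (r.trans' h hb))
    have h₁ : r.nextInClass c < blk x₂ :=
      (lo_le_iff.1 h12.le).lt_of_ne fun h => hcb (h ▸ rel_nextInClass c)
    have h₂ : blk x₂ < c := (le_hi_iff.1 h23.le).lt_of_ne fun h => hcb (h ▸ r.refl' c)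
    exact hr ⟨_, blk x₂, c, blk x₄, h₁, h₂, h₃, r.symm' (rel_nextInClass c), hb,
      fun h => hcb (r.trans' (rel_nextInClass c) h)⟩

theorem isNoncrossing_of_pairing_nextPerm (h : IsNoncrossing (pairing r.nextPerm)) :
    IsNoncrossing r := by
  rintro ⟨a, c, b, d, hac, hcb, hbd, hab, hcd, hac'⟩
  have hcb' : ¬ r c b := fun h => hac' (r.trans' hab (r.symm' h))
  obtain ⟨u, hcu, hcu_le, hub, hbu, -⟩ := exists_lt_lt_nextInClass hcd ⟨hcb, hbd⟩ hcb'
  have hau : ¬ r a u := fun h => hac' (r.trans' h (r.symm' hcu))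
  obtain ⟨s, has, -, hsu, hus, hsb⟩ :=
    exists_lt_lt_nextInClass hab ⟨hac.trans_le hcu_le, hub⟩ hau
  refine h ⟨hi s, hi u, lo (r.nextInClass s), lo (r.nextInClass u), hi_strictMono hsu,
    hi_lt_iff.2 (by rwa [blk_lo]), lo_strictMono (hsb.trans_lt hbu), pairing_hi_lo s,
    pairing_hi_lo u, ?_⟩
  rw [pairing_hi_hi]
  rintro rfl
  exact hau has

variable {p : Setoid (Fin (2 * k))}

theorem rel_hi_lo_nextInClass (hnc : IsNoncrossing p) (hp : IsPairPartition p) (a : Fin k) :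
    p (hi a) (lo (((p ⊔ mSetoid k).comap lo).nextInClass a)) := by
  set r := (p ⊔ mSetoid k).comap lo
  have hy : hp.partner (hi a) = lo (blk (hp.partner (hi a))) := by
    have := hnc.val_mod_two_ne hp (hp.rel_partner (hi a)) (hp.partner_ne _).symm
    rw [show ((hi a : Fin (2 * k)) : ℕ) = 2 * a + 1 from rfl] at this
    exact eq_lo_of_val_mod_two (by omega)
  set b := blk (hp.partner (hi a))
  have hpab : p (hi a) (lo b) := hy ▸ hp.rel_partner (hi a)
  suffices r.nextInClass a = b by rwa [this]
  have hab : r a b := (p ⊔ mSetoid k).trans'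
    ((le_sup_right : mSetoid k ≤ _) (mSetoid_lo_hi a)) ((le_sup_left : p ≤ _) hpab)
  have hsat : ∀ T : Set (Fin k), p ≤ ker (· ∈ blk ⁻¹' T) → ∀ c, r a c → (a ∈ T ↔ c ∈ T) := by
    intro T hT c hc
    have hle : p ⊔ mSetoid k ≤ ker (· ∈ blk ⁻¹' T) :=
      sup_le hT (mSetoid_eq_ker ▸ ker_le_ker_comp blk (· ∈ T))
    simpa using (hle hc : (lo a ∈ blk ⁻¹' T) = (lo c ∈ blk ⁻¹' T))
  rcases lt_or_ge a b with hlt | hle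
  · have hT := hnc.le_ker_mem_Ioo hp hpab (hi_lt_iff.2 (by rwa [blk_lo]))
    rw [← preimage_blk_Ioo] at hT
    exact nextInClass_eq_of_lt hab hlt fun c hc hcT => ((hsat _ hT c hc).2 hcT).1.false
  · have hT := hnc.le_ker_mem_Icc hp (p.symm' hpab)
      ((lo_le_iff.2 (by rwa [blk_hi])).lt_of_ne (lo_ne_hi _ _))
    rw [← preimage_blk_Icc] at hT
    exact nextInClass_eq_of_subset_Icc hab fun c hc => (hsat _ hT c hc).1 ⟨hle, le_rfl⟩

theorem pairing_nextPerm_comap_lo_sup_mSetoid (hnc : IsNoncrossing p) (hp : IsPairPartition p) :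
    pairing ((p ⊔ mSetoid k).comap lo).nextPerm = p :=
  isPairPartition_pairing.eq_of_le hp (pairing_le_iff.2 (rel_hi_lo_nextInClass hnc hp))

theorem bijOn_sup_mSetoid (k : ℕ) :
    BijOn (· ⊔ mSetoid k) {p : Setoid (Fin (2 * k)) | IsPairPartition p ∧ IsNoncrossing p}
      {q | IsNoncrossing q ∧ mSetoid k ≤ q} := by
  refine ⟨?_, ?_, ?_⟩
  · rintro p ⟨hp, hnc⟩
    refine ⟨?_, le_sup_right⟩
    show IsNoncrossing (p ⊔ mSetoid k)
    have hr := isNoncrossing_of_pairing_nextPerm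
      ((pairing_nextPerm_comap_lo_sup_mSetoid hnc hp).symm ▸ hnc)
    rw [← comap_lo_comap_blk (le_sup_right : mSetoid k ≤ p ⊔ mSetoid k)]
    exact hr.comap_of_monotone blk_monotone
  · rintro p₁ ⟨hp₁, hnc₁⟩ p₂ ⟨hp₂, hnc₂⟩ h
    rw [← pairing_nextPerm_comap_lo_sup_mSetoid hnc₁ hp₁,
      ← pairing_nextPerm_comap_lo_sup_mSetoid hnc₂ hp₂]
    exact congrArg (fun q => pairing (q.comap lo).nextPerm) h
  · rintro q ⟨hq, hmq⟩
    refine ⟨pairing (q.comap lo).nextPerm, ⟨isPairPartition_pairing,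
      isNoncrossing_pairing_nextPerm (hq.comap_of_strictMono_s2 lo_strictMono)⟩, ?_⟩
    show pairing _ ⊔ mSetoid k = q
    rw [pairing_nextPerm_sup_mSetoid, comap_lo_comap_blk hmq]

theorem image_comap_blk (j : ℕ) :
    comap blk '' {r : Setoid (Fin k) | IsNoncrossing r ∧ r.classes.ncard = j} =
      {q | IsNoncrossing q ∧ mSetoid k ≤ q} ∩ {q | q.classes.ncard = j} := by
  ext q
  constructor
  · rintro ⟨r, ⟨hr, hj⟩, rfl⟩
    exact ⟨⟨hr.comap_of_monotone blk_monotone, mSetoid_eq_ker ▸ ker_le_comap blk r⟩,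
      (ncard_classes_comap blk_surjective r).trans hj⟩
  · rintro ⟨⟨hq, hmq⟩, hj⟩
    refine ⟨q.comap lo, ⟨hq.comap_of_strictMono_s2 lo_strictMono, ?_⟩, comap_lo_comap_blk hmq⟩
    rw [← ncard_classes_comap blk_surjective, comap_lo_comap_blk hmq, hj]

end MBlock

open MBlock

theorem count_nc_pair_partitions_join_m_general (k j : ℕ) :
    Nat.card {p : Setoid (Fin (2 * k)) //
        IsPairPartition p ∧ IsNoncrossing p ∧ (p ⊔ mSetoid k).classes.ncard = j}
      = Nat.card {q : Setoid (Fin k) // IsNoncrossing q ∧ q.classes.ncard = j}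
    ∧ Set.BijOn (fun p => p ⊔ mSetoid k)
        {p : Setoid (Fin (2 * k)) | IsPairPartition p ∧ IsNoncrossing p}
        {q : Setoid (Fin (2 * k)) | IsNoncrossing q ∧ mSetoid k ≤ q} := by
  have hbij := bijOn_sup_mSetoid k
  have hjoin : {p | IsPairPartition p ∧ IsNoncrossing p ∧ (p ⊔ mSetoid k).classes.ncard = j} =
      {p | IsPairPartition p ∧ IsNoncrossing p} ∩
        (· ⊔ mSetoid k) ⁻¹' {q | q.classes.ncard = j} := by
    ext p
    simp [and_assoc]
  have hcount :
      {p | IsPairPartition p ∧ IsNoncrossing p ∧ (p ⊔ mSetoid k).classes.ncard = j}.ncard =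
        {q : Setoid (Fin k) | IsNoncrossing q ∧ q.classes.ncard = j}.ncard := by
    rw [hjoin, ← (hbij.injOn.mono inter_subset_left).ncard_image, image_inter_preimage,
      hbij.image_eq, ← image_comap_blk,
      ncard_image_of_injective _ (comap_injective _ blk_surjective)]
  exact ⟨hcount, hbij⟩

/-- The number of noncrossing pair partitions `p` of `{1,…,2k}` with `|p ∨ m| = j` equals
the number of noncrossing partitions of `{1,…,k}` with exactly `j` blocks, and
`p ↦ p ∨ m` is a bijection from noncrossing pair partitions of `{1,…,2k}` onto
noncrossing partitions of `{1,…,2k}` whose blocks are unions of blocks of `m`. -/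
theorem count_nc_pair_partitions_join_m (k j : ℕ) (hj1 : 1 ≤ j) (hjk : j ≤ k) :
    Nat.card {p : Setoid (Fin (2 * k)) //
        IsPairPartition p ∧ IsNoncrossing p ∧ (p ⊔ mSetoid k).classes.ncard = j}
      = Nat.card {q : Setoid (Fin k) // IsNoncrossing q ∧ q.classes.ncard = j}
    ∧ Set.BijOn (fun p => p ⊔ mSetoid k)
        {p : Setoid (Fin (2 * k)) | IsPairPartition p ∧ IsNoncrossing p}
        {q : Setoid (Fin (2 * k)) | IsNoncrossing q ∧ mSetoid k ≤ q} :=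
  count_nc_pair_partitions_join_m_general k j
end

section
/- If p ∨ m is a crossing partition of {1,...,2k}, then p itself is crossing, where m = {{1,2},...,{2k-1,2k}}. -/
/-
Joining a noncrossing partition with a partition into intervals (such as `m`) keeps it
noncrossing; it suffices to merge, one interval `S` at a time, all blocks meeting `S`.
If `r` is noncrossing and `u ~ v`, every `r`-block not containing `u` lies entirely inside or
entirely outside the open interval `(u, v)`; so does an interval `S` avoiding `u` and `v`, hence
so does every block of the merged partition. A crossing `p₁ < q₁ < p₂ < q₂` of the merged
partition has one of its pairs related in `r`, and the other pair would be split by it.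
-/

open Set

namespace Setoid

variable {α : Type*}

def mergeClasses (r : Setoid α) (S : Set α) : Setoid α where
  r x y := r x y ∨ ((∃ s ∈ S, r x s) ∧ ∃ s ∈ S, r y s)
  iseqv := by
    refine ⟨fun x => Or.inl (r.refl' x), ?_, ?_⟩
    · rintro x y (h | ⟨hx, hy⟩)
      exacts [Or.inl (r.symm' h), Or.inr ⟨hy, hx⟩]
    · rintro x y z (hxy | ⟨hx, s, hs, hys⟩) (hyz | ⟨⟨t, ht, hyt⟩, hz⟩)
      · exact Or.inl (r.trans' hxy hyz)
      · exact Or.inr ⟨⟨t, ht, r.trans' hxy hyt⟩, hz⟩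
      · exact Or.inr ⟨hx, s, hs, r.trans' (r.symm' hyz) hys⟩
      · exact Or.inr ⟨hx, hz⟩

theorem mergeClasses_bot_apply {S : Set α} {x y : α} :
    (⊥ : Setoid α).mergeClasses S x y ↔ x = y ∨ (x ∈ S ∧ y ∈ S) := by
  change (⊥ : Setoid α) x y ∨ ((∃ s ∈ S, (⊥ : Setoid α) x s) ∧ ∃ s ∈ S, (⊥ : Setoid α) y s) ↔ _
  simp

theorem sup_mergeClasses_bot (r : Setoid α) (S : Set α) :
    r ⊔ (⊥ : Setoid α).mergeClasses S = r.mergeClasses S := by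
  apply le_antisymm
  · refine sup_le (fun x y h => Or.inl h) fun x y h => ?_
    rcases mergeClasses_bot_apply.mp h with rfl | ⟨hx, hy⟩
    exacts [Or.inl (r.refl' x), Or.inr ⟨⟨x, hx, r.refl' x⟩, y, hy, r.refl' y⟩]
  · have hr : r ≤ r ⊔ (⊥ : Setoid α).mergeClasses S := le_sup_left
    rintro x y (h | ⟨⟨s, hs, hxs⟩, t, ht, hyt⟩)
    · exact hr h
    · have hst : (r ⊔ (⊥ : Setoid α).mergeClasses S) s t :=
        le_sup_right (α := Setoid α) (mergeClasses_bot_apply.mpr (Or.inr ⟨hs, ht⟩))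
      exact Setoid.trans' _ (Setoid.trans' _ (hr hxs) hst) (hr (r.symm' hyt))

theorem eq_finsetSup_mergeClasses_bot [Fintype α] (s : Setoid α) :
    s = Finset.univ.sup fun y => (⊥ : Setoid α).mergeClasses {x | s x y} := by
  apply le_antisymm
  · intro x y h
    exact Finset.le_sup (f := fun y => (⊥ : Setoid α).mergeClasses {x | s x y})
      (Finset.mem_univ y) (mergeClasses_bot_apply.mpr (Or.inr ⟨h, s.refl' y⟩))
  · refine Finset.sup_le fun z _ x y h => ?_
    rcases mergeClasses_bot_apply.mp h with rfl | ⟨hx, hy⟩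
    exacts [s.refl' x, s.trans' hx (s.symm' hy)]

end Setoid

theorem Set.OrdConnected.mem_Ioo_iff {α : Type*} [LinearOrder α] {S : Set α}
    (hS : S.OrdConnected) {x y u v : α} (hx : x ∈ S) (hy : y ∈ S) (hu : u ∉ S) (hv : v ∉ S) :
    x ∈ Ioo u v ↔ y ∈ Ioo u v := by
  suffices ∀ {x y}, x ∈ S → y ∈ S → x ∈ Ioo u v → y ∈ Ioo u v from ⟨this hx hy, this hy hx⟩
  intro x y hx hy ⟨hux, hxv⟩
  by_contra hyuv
  rcases le_or_gt y u with hyu | huy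
  · exact hu (hS.out hy hx ⟨hyu, hux.le⟩)
  · exact hv (hS.out hx hy ⟨hxv.le, not_lt.mp fun hyv => hyuv ⟨huy, hyv⟩⟩)

namespace IsNoncrossing

variable {N : ℕ} {r : Setoid (Fin N)}

theorem mem_Ioo_iff (hr : IsNoncrossing r) {u v x y : Fin N} (huv : r u v) (hxy : r x y)
    (hxu : ¬ r x u) : x ∈ Ioo u v ↔ y ∈ Ioo u v := by
  suffices ∀ {x y}, r x y → ¬ r x u → x ∈ Ioo u v → y ∈ Ioo u v from
    ⟨this hxy hxu, this (r.symm' hxy) fun hyu => hxu (r.trans' hxy hyu)⟩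
  intro x y hxy hxu ⟨hux, hxv⟩
  by_contra hyuv
  rcases lt_trichotomy y u with hyu | rfl | huy
  · exact hr ⟨y, u, x, v, hyu, hux, hxv, r.symm' hxy, huv,
      fun h => hxu (r.trans' hxy h)⟩
  · exact hxu hxy
  rcases lt_trichotomy y v with hyv | rfl | hvy
  · exact hyuv ⟨huy, hyv⟩
  · exact hxu (r.trans' hxy (r.symm' huv))
  · exact hr ⟨u, x, v, y, hux, hxv, hvy, huv, hxy, fun h => hxu (r.symm' h)⟩

theorem mergeClasses_mem_Ioo_iff (hr : IsNoncrossing r) {S : Set (Fin N)} (hS : S.OrdConnected)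
    {u v x y : Fin N} (huv : r u v) (hxy : r.mergeClasses S x y) (hxu : ¬ r.mergeClasses S x u) :
    x ∈ Ioo u v ↔ y ∈ Ioo u v := by
  rcases hxy with hxy | ⟨⟨s, hs, hxs⟩, t, ht, hyt⟩
  · exact hr.mem_Ioo_iff huv hxy fun h => hxu (Or.inl h)
  have hu : u ∉ S := fun hu => hxu (Or.inr ⟨⟨s, hs, hxs⟩, u, hu, r.refl' u⟩)
  have hv : v ∉ S := fun hv => hxu (Or.inr ⟨⟨s, hs, hxs⟩, v, hv, huv⟩)
  have htu : ¬ r t u := fun h => hxu (Or.inr ⟨⟨s, hs, hxs⟩, t, ht, r.symm' h⟩)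
  calc x ∈ Ioo u v ↔ s ∈ Ioo u v := hr.mem_Ioo_iff huv hxs fun h => hxu (Or.inl h)
    _ ↔ t ∈ Ioo u v := hS.mem_Ioo_iff hs ht hu hv
    _ ↔ y ∈ Ioo u v := hr.mem_Ioo_iff huv (r.symm' hyt) htu

theorem mergeClasses (hr : IsNoncrossing r) {S : Set (Fin N)} (hS : S.OrdConnected) :
    IsNoncrossing (r.mergeClasses S) := by
  rintro ⟨p₁, q₁, p₂, q₂, h₁, h₂, h₃, hp, hq, hpq⟩
  -- if neither pair were related in `r`, both would lie in the merged block
  have : r p₁ p₂ ∨ r q₁ q₂ := by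
    by_contra! h
    exact hpq (Or.inr ⟨(hp.resolve_left h.1).1, (hq.resolve_left h.2).1⟩)
  rcases this with hp' | hq'
  · have := hr.mergeClasses_mem_Ioo_iff hS hp' hq fun h => hpq ((r.mergeClasses S).symm' h)
    exact (this.mp ⟨h₁, h₂⟩).2.not_gt h₃
  · have := hr.mergeClasses_mem_Ioo_iff hS hq' hp hpq
    exact (this.mpr ⟨h₂, h₃⟩).1.not_gt h₁

theorem sup_finsetSup_mergeClasses_bot (hr : IsNoncrossing r) {ι : Type*} (t : Finset ι)
    {S : ι → Set (Fin N)} (hS : ∀ i ∈ t, (S i).OrdConnected) :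
    IsNoncrossing (r ⊔ t.sup fun i => (⊥ : Setoid (Fin N)).mergeClasses (S i)) := by
  classical
  induction t using Finset.induction_on with
  | empty => simpa using hr
  | insert i t _ ih =>
    rw [Finset.sup_insert, sup_left_comm, sup_comm, Setoid.sup_mergeClasses_bot]
    exact (ih fun j hj => hS j (Finset.mem_insert_of_mem hj)).mergeClasses
      (hS i (Finset.mem_insert_self i t))

theorem sup_of_ordConnected (hr : IsNoncrossing r) {s : Setoid (Fin N)}
    (hs : ∀ y, {x | s x y}.OrdConnected) : IsNoncrossing (r ⊔ s) := by
  rw [s.eq_finsetSup_mergeClasses_bot]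
  exact hr.sup_finsetSup_mergeClasses_bot _ fun y _ => hs y

end IsNoncrossing

theorem mSetoid_ordConnected (k : ℕ) (y : Fin (2 * k)) : {x | mSetoid k x y}.OrdConnected :=
  ⟨fun a (ha : a.val / 2 = y.val / 2) b (hb : b.val / 2 = y.val / 2) z ⟨haz, hzb⟩ =>
    show z.val / 2 = y.val / 2 by rw [Fin.le_def] at haz hzb; omega⟩

/-- If `p ∨ m` is crossing, then `p` is crossing. -/
theorem crossing_of_join_m_crossing (k : ℕ) (p : Setoid (Fin (2 * k)))
    (h : ¬ IsNoncrossing (p ⊔ mSetoid k)) : ¬ IsNoncrossing p :=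
  fun hp => h (hp.sup_of_ordConnected (mSetoid_ordConnected k))
end

section
/- For every l ≥ 1, 2·∑_{j=0}^{l−1} [ C(l−1,j)² − C(l−1,j−1)·C(l−1,j+1) ] κ^{j+1} (1−κ)^{l−j} = (2/l)·∑_{j=1}^{l} C(l,j)·C(l,j−1)·κ^{j}(1−κ)^{l+1−j}, as an identity of polynomials in κ. -/
/-!
The bracket is a Narayana number: `(n + 1) (C(n,j)² - C(n,j-1) C(n,j+1)) = C(n+1,j+1) C(n+1,j)`.
With `l = n + 1`, the two sides therefore agree term by term once the right-hand sum is
reindexed by `j ↦ j + 1`.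
-/

theorem Nat.succ_mul_choose_succ_sq (n k : ℕ) :
    (n + 1) * n.choose (k + 1) ^ 2 =
      (n + 1).choose (k + 2) * (n + 1).choose (k + 1) +
        (n + 1) * (n.choose k * n.choose (k + 2)) := by
  obtain hnk | ⟨r, rfl⟩ : n < k + 1 ∨ ∃ r, n = k + 1 + r :=
    (lt_or_ge n (k + 1)).imp_right Nat.exists_eq_add_of_le
  · simp [Nat.choose_eq_zero_of_lt hnk, Nat.choose_eq_zero_of_lt (by omega : n < k + 2),
      Nat.choose_eq_zero_of_lt (by omega : n + 1 < k + 2)]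
  · set a := (k + 1 + r).choose k
    set b := (k + 1 + r).choose (k + 1)
    set c := (k + 1 + r).choose (k + 2)
    have hab : b * (k + 1) = a * (r + 1) := by
      rw [Nat.choose_succ_right_eq]; congr 1; omega
    have hbc : c * (k + 2) = b * r := by
      rw [Nat.choose_succ_right_eq]; congr 1; omega
    rw [Nat.choose_succ_succ', Nat.choose_succ_succ']
    -- clearing the denominators of `a = b (k + 1) / (r + 1)` and `c = b r / (k + 2)`
    apply Nat.eq_of_mul_eq_mul_left (by positivity : 0 < (r + 1) * (k + 2))
    zify at hab hbc ⊢
    linear_combination ((r + k + 2) * b * (r + 1) + (r + k + 3) * (c * (k + 2) - b * r)) * hab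
      - (r + k + 2) * b * (k + 2) * hbc

theorem succ_mul_choose_sq_sub_choose_mul_choose {R : Type*} [CommRing R] (n j : ℕ) :
    ((n : R) + 1) * ((n.choose j : R) ^ 2 -
        (if j = 0 then 0 else (n.choose (j - 1) : R)) * n.choose (j + 1)) =
      (n + 1).choose (j + 1) * (n + 1).choose j := by
  cases j with
  | zero => simp
  | succ k =>
    have h := congrArg (Nat.cast : ℕ → R) (Nat.succ_mul_choose_succ_sq n k)
    push_cast at h
    simp only [Nat.add_one_ne_zero, if_false, Nat.add_sub_cancel]
    linear_combination h

theorem narayana_binomial_identity_general (l : ℕ) (κ : ℝ) :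
    2 * ∑ j ∈ Finset.range l,
        (((l - 1).choose j : ℝ) ^ 2 -
            (if j = 0 then 0 else ((l - 1).choose (j - 1) : ℝ)) * ((l - 1).choose (j + 1) : ℝ))
          * κ ^ (j + 1) * (1 - κ) ^ (l - j)
      = (2 / (l : ℝ)) * ∑ j ∈ Finset.Icc 1 l,
          (l.choose j : ℝ) * (l.choose (j - 1) : ℝ) * κ ^ j * (1 - κ) ^ (l + 1 - j) := by
  cases l with
  | zero => simp
  | succ n =>
    rw [← Finset.Ico_add_one_right_eq_Icc, Finset.sum_Ico_eq_sum_range, Finset.mul_sum,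
      Finset.mul_sum]
    refine Finset.sum_congr (by simp) fun j hj => ?_
    have hjn : j ≤ n := Nat.lt_succ_iff.mp (Finset.mem_range.mp hj)
    rw [show n + 1 + 1 - (1 + j) = n + 1 - j by omega, Nat.add_sub_cancel_left, add_comm 1 j,
      Nat.add_sub_cancel, ← succ_mul_choose_sq_sub_choose_mul_choose]
    push_cast
    field_simp

/-- The binomial identity
`2·∑_{j=0}^{l-1} [C(l-1,j)² - C(l-1,j-1)·C(l-1,j+1)] κ^{j+1}(1-κ)^{l-j}
  = (2/l)·∑_{j=1}^{l} C(l,j)·C(l,j-1)·κ^j (1-κ)^{l+1-j}` for all real `κ`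
(with the convention `C(a,-1) = 0`). -/
theorem narayana_binomial_identity (l : ℕ) (hl : 1 ≤ l) (κ : ℝ) :
    2 * ∑ j ∈ Finset.range l,
        (((l - 1).choose j : ℝ) ^ 2 -
            (if j = 0 then 0 else ((l - 1).choose (j - 1) : ℝ)) * ((l - 1).choose (j + 1) : ℝ))
          * κ ^ (j + 1) * (1 - κ) ^ (l - j)
      = (2 / (l : ℝ)) * ∑ j ∈ Finset.Icc 1 l,
          (l.choose j : ℝ) * (l.choose (j - 1) : ℝ) * κ ^ j * (1 - κ) ^ (l + 1 - j) :=
  narayana_binomial_identity_general l κ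
end

section
/- For 0 < κ < 1 and integer l ≥ 1, the l-th moment of the measure μ with density (1/(πx))·√((x−a)(b−x)) on [a,b], where a = 1 − 2√(κ(1−κ)) and b = 1 + 2√(κ(1−κ)), plus mass |1−2κ| at 0, equals 2·∑_{j=1}^{l} N(l,j)·κ^j·(1−κ)^{l+1−j}, where N(l,j) = (1/l)C(l,j)C(l,j−1) is the Narayana number. -/
/-! Writing `l = n + 1`, the factor `x` of `x ^ l` cancels the `1 / x` in the density and
kills the atom at `0`, so the moment is `π⁻¹ ∫ x ^ n √((x - a) (b - x))` over
`[a, b] = [1 - 2s, 1 + 2s]` with `s² = κ (1 - κ)`. The substitution `x = 1 - 2s cos θ` and the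
binomial theorem reduce this to the integrals `∫₀^π cos^(2m) θ sin² θ dθ = π Cat(m) / (2·4^m)`,
giving `2 ∑ₘ C(n, 2m) Cat(m) s^(2m+2)`. Touchard's identity, at `x = κ`, `y = 1 - κ`, turns this
into the Narayana sum; its coefficients are Vandermonde convolutions. -/

open MeasureTheory

/-- The measure `μ_{ch,2} = |1-2κ|·δ₀ + 1_{[a,b]}(x)·(1/(πx))√((x-a)(b-x)) dx`, where
`a = 1 - 2√(κ(1-κ))`, `b = 1 + 2√(κ(1-κ))`. -/
noncomputable def muCh2 (κ : ℝ) : Measure ℝ :=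
  ENNReal.ofReal |1 - 2 * κ| • Measure.dirac 0 +
    volume.withDensity (fun x =>
      ENNReal.ofReal (Set.indicator
        (Set.Icc (1 - 2 * Real.sqrt (κ * (1 - κ))) (1 + 2 * Real.sqrt (κ * (1 - κ))))
        (fun y => (1 / (Real.pi * y)) *
          Real.sqrt ((y - (1 - 2 * Real.sqrt (κ * (1 - κ)))) *
            ((1 + 2 * Real.sqrt (κ * (1 - κ))) - y))) x))

open Real Finset
open scoped Nat

theorem integral_cos_pow_two_mul (m : ℕ) :
    ∫ θ in (0 : ℝ)..π, cos θ ^ (2 * m) = π * m.centralBinom / 4 ^ m := by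
  induction m with
  | zero => simp
  | succ m ih =>
    have hrec : ((m : ℝ) + 1) * (m + 1).centralBinom = 2 * (2 * m + 1) * m.centralBinom := by
      exact_mod_cast Nat.succ_mul_centralBinom_succ m
    rw [mul_add_one, integral_cos_pow, ih]
    simp only [sin_zero, sin_pi, mul_zero, sub_zero, zero_div, zero_add]
    push_cast
    field_simp
    linear_combination (-2 * (4 : ℝ) ^ m) * hrec

theorem integral_cos_pow_two_mul_add_one (m : ℕ) :
    ∫ θ in (0 : ℝ)..π, cos θ ^ (2 * m + 1) = 0 := by
  induction m with
  | zero => simp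
  | succ m ih =>
    rw [show 2 * (m + 1) + 1 = 2 * m + 1 + 2 by ring, integral_cos_pow]
    simp [ih]

theorem integral_cos_pow_mul_sin_sq (k : ℕ) :
    ∫ θ in (0 : ℝ)..π, cos θ ^ k * sin θ ^ 2 = (∫ θ in (0 : ℝ)..π, cos θ ^ k) / (k + 2) := by
  have h : ∀ θ : ℝ, cos θ ^ k * sin θ ^ 2 = cos θ ^ k - cos θ ^ (k + 2) := fun θ => by
    linear_combination cos θ ^ k * sin_sq_add_cos_sq θ
  simp_rw [h]
  rw [intervalIntegral.integral_sub
    ((by fun_prop : Continuous fun θ => cos θ ^ k).intervalIntegrable _ _)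
    ((by fun_prop : Continuous fun θ => cos θ ^ (k + 2)).intervalIntegrable _ _), integral_cos_pow]
  simp only [sin_zero, sin_pi, mul_zero, sub_zero, zero_div, zero_add]
  field_simp
  ring

theorem integral_cos_pow_two_mul_mul_sin_sq (m : ℕ) :
    ∫ θ in (0 : ℝ)..π, cos θ ^ (2 * m) * sin θ ^ 2 = π * catalan m / (2 * 4 ^ m) := by
  have hcat : ((m : ℝ) + 1) * catalan m = m.centralBinom := by
    exact_mod_cast succ_mul_catalan_eq_centralBinom m
  rw [integral_cos_pow_mul_sin_sq, integral_cos_pow_two_mul, ← hcat]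
  push_cast
  field_simp

theorem integral_cos_pow_two_mul_add_one_mul_sin_sq (m : ℕ) :
    ∫ θ in (0 : ℝ)..π, cos θ ^ (2 * m + 1) * sin θ ^ 2 = 0 := by
  rw [integral_cos_pow_mul_sin_sq, integral_cos_pow_two_mul_add_one, zero_div]

theorem Finset.sum_range_two_mul {M : Type*} [AddCommMonoid M] (f : ℕ → M) (n : ℕ) :
    ∑ k ∈ range (2 * n), f k = ∑ m ∈ range n, (f (2 * m) + f (2 * m + 1)) := by
  induction n with
  | zero => simp
  | succ n ih =>
    rw [mul_add_one, sum_range_succ, sum_range_succ, sum_range_succ, ih, add_assoc]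

theorem integral_mul_sqrt_eq_integral_cos {f : ℝ → ℝ} (hf : Continuous f) (c : ℝ) {s : ℝ}
    (hs : 0 ≤ s) :
    ∫ x in (c - 2 * s)..(c + 2 * s), f x * √((x - (c - 2 * s)) * (c + 2 * s - x))
      = ∫ θ in (0 : ℝ)..π, f (c - 2 * s * cos θ) * (2 * s * sin θ) ^ 2 := by
  have hsubst := intervalIntegral.integral_comp_mul_deriv (a := 0) (b := π)
    (f := fun θ => c - 2 * s * cos θ)
    (fun θ _ => by simpa using ((hasDerivAt_cos θ).const_mul (2 * s)).const_sub c)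
    (by fun_prop : Continuous fun θ => 2 * s * sin θ).continuousOn
    (g := fun x => f x * √((x - (c - 2 * s)) * (c + 2 * s - x))) (by fun_prop)
  simp only [cos_zero, cos_pi, Function.comp_apply] at hsubst
  rw [show c - 2 * s * -1 = c + 2 * s by ring, mul_one] at hsubst
  rw [← hsubst]
  refine intervalIntegral.integral_congr fun θ hθ => ?_
  rw [Set.uIcc_of_le pi_pos.le] at hθ
  have hsin : 0 ≤ sin θ := sin_nonneg_of_nonneg_of_le_pi hθ.1 hθ.2
  have hsq : (c - 2 * s * cos θ - (c - 2 * s)) * (c + 2 * s - (c - 2 * s * cos θ))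
      = (2 * s * sin θ) ^ 2 := by
    linear_combination -(2 * s) ^ 2 * sin_sq_add_cos_sq θ
  rw [hsq, sqrt_sq (by positivity)]
  ring

theorem integral_pow_mul_sqrt_eq_sum_choose_mul_catalan (c : ℝ) {s : ℝ} (hs : 0 ≤ s) (n : ℕ) :
    ∫ x in (c - 2 * s)..(c + 2 * s), x ^ n * √((x - (c - 2 * s)) * (c + 2 * s - x))
      = 2 * π * ∑ m ∈ range (n + 1),
          n.choose (2 * m) * catalan m * c ^ (n - 2 * m) * s ^ (2 * m + 2) := by
  have hexpand : ∀ θ, (c - 2 * s * cos θ) ^ n * (2 * s * sin θ) ^ 2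
      = ∑ k ∈ range (2 * (n + 1)),
          n.choose k * c ^ (n - k) * (-2 * s) ^ k * (2 * s) ^ 2 * (cos θ ^ k * sin θ ^ 2) := by
    intro θ
    rw [show c - 2 * s * cos θ = -2 * s * cos θ + c by ring, add_pow, sum_mul]
    refine sum_subset_zero_on_sdiff (range_subset_range.2 (by omega)) (fun k hk => ?_)
      (fun k _ => by ring)
    simp only [mem_sdiff, mem_range, not_lt] at hk
    simp [Nat.choose_eq_zero_of_lt (show n < k by omega)]
  rw [integral_mul_sqrt_eq_integral_cos (by fun_prop) c hs]
  simp_rw [hexpand]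
  rw [intervalIntegral.integral_finsetSum fun k _ =>
    (by fun_prop : Continuous _).intervalIntegrable _ _]
  simp_rw [intervalIntegral.integral_const_mul, sum_range_two_mul,
    integral_cos_pow_two_mul_mul_sin_sq, integral_cos_pow_two_mul_add_one_mul_sin_sq, mul_sum]
  refine sum_congr rfl fun m _ => ?_
  rw [pow_mul, neg_mul, neg_sq, mul_pow, mul_pow]
  field_simp
  ring

theorem Nat.succ_mul_choose_mul_catalan_mul_choose {a b m : ℕ} (hma : m ≤ a) :
    (b + 1) * ((a + b).choose (2 * m) * catalan m * (a + b - 2 * m).choose (a - m))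
      = (a + b).choose a * a.choose m * (b + 1).choose (m + 1) := by
  rcases le_or_gt m b with hmb | hbm
  · obtain ⟨a, rfl⟩ := Nat.exists_eq_add_of_le hma
    obtain ⟨b, rfl⟩ := Nat.exists_eq_add_of_le hmb
    have hcat : (catalan m : ℚ) = (m + m).choose m / (m + 1) := by
      rw [← two_mul, eq_div_iff (by positivity), mul_comm]
      exact_mod_cast succ_mul_catalan_eq_centralBinom m
    have hN : ((m + a + (m + b)).choose (m + m) : ℚ)
        = (m + a + (m + b))! / ((m + m)! * (a + b)!) := by
      rw [show m + a + (m + b) = m + m + (a + b) by ring, Nat.cast_add_choose]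
    rw [show m + a + (m + b) - 2 * m = a + b by omega, Nat.add_sub_cancel_left, two_mul,
      show m + b + 1 = (m + 1) + b by ring]
    apply Nat.cast_injective (R := ℚ)
    push_cast
    rw [hcat, hN, Nat.cast_add_choose, Nat.cast_add_choose, Nat.cast_add_choose,
      Nat.cast_add_choose, Nat.cast_add_choose]
    push_cast [Nat.factorial_succ, show m + 1 + b = (m + b) + 1 by ring]
    field_simp
    ring
  · have hC : (b + 1).choose (m + 1) = 0 := Nat.choose_eq_zero_of_lt (by omega)
    rcases le_or_gt (2 * m) (a + b) with h2m | h2m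
    · rw [hC, Nat.choose_eq_zero_of_lt (n := a + b - 2 * m) (by omega)]; simp
    · rw [hC, Nat.choose_eq_zero_of_lt h2m]; simp

theorem Nat.sum_range_choose_mul_choose_succ (a b : ℕ) :
    ∑ m ∈ range (a + 1), a.choose m * (b + 1).choose (m + 1) = (a + b + 1).choose (a + 1) := by
  rw [show a + b + 1 = (b + 1) + a by ring, Nat.add_choose_eq,
    Nat.sum_antidiagonal_eq_sum_range_succ_mk, sum_range_succ' _ (a + 1)]
  simp only [Nat.choose_zero_right, Nat.sub_zero, Nat.choose_succ_self, mul_zero, add_zero]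
  refine sum_congr rfl fun m hm => ?_
  rw [mul_comm, Nat.add_sub_add_right, Nat.choose_symm (mem_range_succ_iff.1 hm)]

theorem Nat.succ_mul_sum_choose_mul_catalan_mul_choose (a b : ℕ) :
    (a + b + 1) * ∑ m ∈ range (a + 1),
        (a + b).choose (2 * m) * catalan m * (a + b - 2 * m).choose (a - m)
      = (a + b + 1).choose (a + 1) * (a + b + 1).choose a := by
  refine Nat.eq_of_mul_eq_mul_left b.succ_pos ?_
  calc (b + 1) * ((a + b + 1) * ∑ m ∈ range (a + 1),
          (a + b).choose (2 * m) * catalan m * (a + b - 2 * m).choose (a - m))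
      = (a + b).choose a * (a + b + 1) * (a + b + 1).choose (a + 1) := by
        rw [mul_left_comm, mul_sum, sum_congr rfl fun m hm =>
          succ_mul_choose_mul_catalan_mul_choose (mem_range_succ_iff.1 hm),
          ← sum_range_choose_mul_choose_succ]
        simp only [mul_sum]
        exact sum_congr rfl fun _ _ => by ring
    _ = (b + 1) * ((a + b + 1).choose (a + 1) * (a + b + 1).choose a) := by
        rw [Nat.choose_mul_succ_eq, show a + b + 1 - a = b + 1 by omega]
        ring

section

variable {R : Type*} [CommSemiring R]

theorem sum_Ico_choose_mul_pow_mul_pow (x y : R) (m k : ℕ) :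
    ∑ q ∈ Ico m (2 * m + k + 1), (k.choose (q - m) : R) * x ^ q * y ^ (2 * m + k - q)
      = (x * y) ^ m * (x + y) ^ k := by
  rw [sum_Ico_eq_sum_range, show 2 * m + k + 1 - m = (k + 1) + m by omega, sum_range_add,
    add_pow, mul_sum]
  rw [sum_eq_zero (s := range m) fun i _ => by
    rw [Nat.add_sub_cancel_left, Nat.choose_eq_zero_of_lt (by omega), Nat.cast_zero, zero_mul,
      zero_mul], add_zero]
  refine sum_congr rfl fun i hi => ?_
  rw [Nat.add_sub_cancel_left, show 2 * m + k - (m + i) = m + (k - i) by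
    have := mem_range_succ_iff.1 hi; omega]
  ring

theorem sum_mul_pow_mul_add_pow_eq_sum {g : ℕ → R} {n : ℕ} (hg : ∀ m, n < 2 * m → g m = 0)
    (x y : R) :
    ∑ m ∈ range (n + 1), g m * (x * y) ^ m * (x + y) ^ (n - 2 * m)
      = ∑ q ∈ range (n + 1),
          (∑ m ∈ range (q + 1), g m * (n - 2 * m).choose (q - m)) * x ^ q * y ^ (n - q) := by
  simp_rw [sum_mul, range_eq_Ico]
  rw [← sum_Ico_Ico_comm]
  refine sum_congr rfl fun m _ => ?_
  rcases le_or_gt (2 * m) n with hm | hm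
  · obtain ⟨k, rfl⟩ := Nat.exists_eq_add_of_le hm
    simp_rw [mul_assoc, ← mul_sum, Nat.add_sub_cancel_left]
    rw [← sum_Ico_choose_mul_pow_mul_pow]
    simp_rw [mul_assoc]
  · simp [hg m hm]

/-- Touchard's identity for the Narayana polynomials. -/
theorem succ_mul_sum_choose_mul_catalan_mul_pow (x y : R) (n : ℕ) :
    (n + 1) * ∑ m ∈ range (n + 1),
        (n.choose (2 * m) * catalan m : R) * (x * y) ^ m * (x + y) ^ (n - 2 * m)
      = ∑ q ∈ range (n + 1),
          ((n + 1).choose (q + 1) * (n + 1).choose q : R) * x ^ q * y ^ (n - q) := by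
  rw [sum_mul_pow_mul_add_pow_eq_sum fun m hm => by simp [Nat.choose_eq_zero_of_lt hm], mul_sum]
  refine sum_congr rfl fun q hq => ?_
  obtain ⟨b, rfl⟩ := Nat.exists_eq_add_of_le (mem_range_succ_iff.1 hq)
  rw [← mul_assoc, ← mul_assoc]
  congr 2
  exact_mod_cast congrArg (Nat.cast : ℕ → R) (Nat.succ_mul_sum_choose_mul_catalan_mul_choose q b)

end

section

open Set

theorem integral_smul_dirac_add_withDensity {α : Type*} [MeasurableSpace α]
    [MeasurableSingletonClass α] {μ : Measure α} {f d : α → ℝ} {x₀ : α} (c : ℝ)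
    (hf : f x₀ = 0) (hd : Measurable d) (hd0 : ∀ x, 0 ≤ d x)
    (hfd : Integrable (fun x => f x * d x) μ) :
    ∫ x, f x ∂(ENNReal.ofReal c • Measure.dirac x₀ +
        μ.withDensity fun x => ENNReal.ofReal (d x))
      = ∫ x, f x * d x ∂μ := by
  have hd' : Measurable fun x => ENNReal.ofReal (d x) := ENNReal.measurable_ofReal.comp hd
  have hfinite : ∀ᵐ x ∂μ, ENNReal.ofReal (d x) < ⊤ := .of_forall fun _ => ENNReal.ofReal_lt_top
  have htoReal : ∀ x, (ENNReal.ofReal (d x)).toReal = d x :=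
    fun x => ENNReal.toReal_ofReal (hd0 x)
  rw [integral_add_measure, MeasureTheory.integral_smul_measure, integral_dirac, hf, smul_zero,
    zero_add, integral_withDensity_eq_integral_toReal_smul hd' hfinite]
  · simp_rw [htoReal, smul_eq_mul, mul_comm]
  · exact ((integrable_const (f x₀)).congr (ae_eq_dirac f).symm).smul_measure
      ENNReal.ofReal_ne_top
  · rw [integrable_withDensity_iff hd' hfinite]
    simpa only [htoReal] using hfd

theorem pow_succ_mul_indicator_ae_eq (a b : ℝ) (g : ℝ → ℝ) (n : ℕ) :
    (fun x => x ^ (n + 1) * (Icc a b).indicator (fun y => 1 / (π * y) * g y) x)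
      =ᵐ[volume] (Icc a b).indicator fun x => π⁻¹ * (x ^ n * g x) := by
  filter_upwards [compl_mem_ae_iff.2 (volume_singleton (a := (0 : ℝ)))] with x hx
  by_cases hmem : x ∈ Icc a b
  · rw [indicator_of_mem hmem, indicator_of_mem hmem]
    field_simp [show x ≠ 0 from hx]
    ring
  · rw [indicator_of_notMem hmem, indicator_of_notMem hmem, mul_zero]

theorem integral_pow_succ_smul_dirac_add_withDensity {a b : ℝ} (ha : 0 ≤ a) (hab : a ≤ b)
    (c : ℝ) (n : ℕ) :
    ∫ x, x ^ (n + 1) ∂(ENNReal.ofReal c • Measure.dirac 0 + volume.withDensity fun x =>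
        ENNReal.ofReal ((Icc a b).indicator (fun y => 1 / (π * y) * √((y - a) * (b - y))) x))
      = π⁻¹ * ∫ x in a..b, x ^ n * √((x - a) * (b - x)) := by
  have hae := pow_succ_mul_indicator_ae_eq a b (fun y => √((y - a) * (b - y))) n
  have hint : Integrable
      ((Icc a b).indicator fun x => π⁻¹ * (x ^ n * √((x - a) * (b - x)))) :=
    (integrable_indicator_iff measurableSet_Icc).2
      ((by fun_prop : Continuous _).continuousOn.integrableOn_compact isCompact_Icc)
  have hdensity_nonneg (x : ℝ) :
      0 ≤ (Icc a b).indicator (fun y => 1 / (π * y) * √((y - a) * (b - y))) x := by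
    refine indicator_nonneg (fun y hy => ?_) x
    have : 0 ≤ y := ha.trans hy.1
    positivity
  rw [integral_smul_dirac_add_withDensity c (by simp)
      ((by fun_prop : Measurable _).indicator measurableSet_Icc) hdensity_nonneg
      (hint.congr hae.symm),
    integral_congr_ae hae, MeasureTheory.integral_indicator measurableSet_Icc,
    integral_Icc_eq_integral_Ioc, ← intervalIntegral.integral_of_le hab,
    intervalIntegral.integral_const_mul]

theorem integral_pow_succ_muCh2 (κ : ℝ) (n : ℕ) :
    ∫ x, x ^ (n + 1) ∂muCh2 κ
      = π⁻¹ * ∫ x in (1 - 2 * √(κ * (1 - κ)))..(1 + 2 * √(κ * (1 - κ))),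
          x ^ n * √((x - (1 - 2 * √(κ * (1 - κ)))) * (1 + 2 * √(κ * (1 - κ)) - x)) := by
  have hs : √(κ * (1 - κ)) ≤ 1 / 2 := by
    rw [sqrt_le_left (by norm_num)]
    nlinarith [sq_nonneg (2 * κ - 1)]
  exact integral_pow_succ_smul_dirac_add_withDensity (a := 1 - 2 * √(κ * (1 - κ)))
    (by linarith) (by linarith [sqrt_nonneg (κ * (1 - κ))]) _ n

end

/-- The `l`-th moment of `μ_{ch,2}` equals `2·∑_{j=1}^{l} N(l,j)·κ^j·(1-κ)^{l+1-j}`,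
where `N(l,j) = (1/l)·C(l,j)·C(l,j-1)` is the Narayana number. -/
theorem moment_muCh2 (κ : ℝ) (h0 : 0 < κ) (h1 : κ < 1) (l : ℕ) (hl : 1 ≤ l) :
    ∫ x, x ^ l ∂(muCh2 κ)
      = 2 * ∑ j ∈ Finset.Icc 1 l,
          (1 / (l : ℝ)) * (l.choose j : ℝ) * (l.choose (j - 1) : ℝ) *
            κ ^ j * (1 - κ) ^ (l + 1 - j) := by
  obtain ⟨n, rfl⟩ := Nat.exists_eq_add_of_le' hl
  have hs : √(κ * (1 - κ)) ^ 2 = κ * (1 - κ) := sq_sqrt (by nlinarith)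
  have hcatalan : ∑ m ∈ range (n + 1),
        (n.choose (2 * m) * catalan m : ℝ) * 1 ^ (n - 2 * m) * √(κ * (1 - κ)) ^ (2 * m + 2)
      = κ * (1 - κ) * ∑ m ∈ range (n + 1),
          (n.choose (2 * m) * catalan m : ℝ) * (κ * (1 - κ)) ^ m * (κ + (1 - κ)) ^ (n - 2 * m) := by
    rw [mul_sum, add_sub_cancel]
    refine sum_congr rfl fun m _ => ?_
    rw [show 2 * m + 2 = 2 * (m + 1) by ring, pow_mul, hs]
    ring
  have hnarayana : ∑ j ∈ Icc 1 (n + 1), (1 / ((n + 1 : ℕ) : ℝ)) * ((n + 1).choose j : ℝ)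
        * ((n + 1).choose (j - 1) : ℝ) * κ ^ j * (1 - κ) ^ (n + 1 + 1 - j)
      = κ * (1 - κ) / (n + 1) * ∑ q ∈ range (n + 1),
          ((n + 1).choose (q + 1) * (n + 1).choose q : ℝ) * κ ^ q * (1 - κ) ^ (n - q) := by
    rw [← Ico_add_one_right_eq_Icc, sum_Ico_eq_sum_range, mul_sum]
    refine sum_congr (by simp) fun q hq => ?_
    rw [show n + 1 + 1 - (1 + q) = n - q + 1 by have := mem_range.1 hq; omega, add_comm 1 q,
      Nat.add_sub_cancel]
    push_cast
    ring
  rw [integral_pow_succ_muCh2, integral_pow_mul_sqrt_eq_sum_choose_mul_catalan 1 (sqrt_nonneg _),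
    hcatalan, hnarayana, ← succ_mul_sum_choose_mul_catalan_mul_pow]
  field_simp
end

section
/- For 0 < κ < 1 and l ≥ 1: (2κ(1−κ)/π)·∫_{−π}^{π} sin²θ · (2√(κ(1−κ)) cos θ + 1)^{l−1} dθ = 2·∑_{j=0}^{l−1} [ C(l−1,j)² − C(l−1,j−1)C(l−1,j+1) ] κ^{j+1}(1−κ)^{l−j}. -/
/-!
Write `κ = c²` and `1 - κ = s²`. Then `2cs cos θ + 1 = |c e^{iθ} + s|²`, so the integrand is
`sin² θ |Q(θ)|²` with `Q(θ) = (c e^{iθ} + s)^{l-1} = ∑ B_k e^{ikθ}`, `B_k = C(l-1,k) c^k s^{l-1-k}`.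
Orthogonality of the characters `e^{ikθ}` on `[-π, π]` gives `∫ cos(mθ) |Q(θ)|² = 2π ∑ B_k B_{k+m}`,
so by `sin² θ = (1 - cos 2θ)/2` the integral is `π (∑ B_k² - ∑ B_k B_{k+2})`. Multiplied by
`κ(1-κ) = c²s²`, these are the two binomial sums of the right-hand side, the second one after the
shift `j = k + 1`.
-/

open Real Finset Complex ComplexConjugate

theorem integral_exp_int_mul_mul_I (n : ℤ) :
    ∫ θ in (-π)..π, exp (n * θ * I) = if n = 0 then (2 * π : ℂ) else 0 := by
  split_ifs with hn
  · simp only [hn, Int.cast_zero, zero_mul, Complex.exp_zero, intervalIntegral.integral_const,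
      sub_neg_eq_add, real_smul, ofReal_add, mul_one]
    ring
  have hnI : (n : ℂ) * I ≠ 0 := by simp [hn]
  simp_rw [mul_right_comm _ _ I]
  rw [integral_exp_mul_complex hnI, div_eq_zero_iff, sub_eq_zero]
  left
  have hperiod : (n : ℂ) * I * (-π : ℝ) = n * I * π + (-n : ℤ) * (2 * π * I) := by
    push_cast; ring
  rw [hperiod, Complex.exp_add, exp_int_mul_two_pi_mul_I, mul_one]

noncomputable def trigPolynomial (a : ℕ → ℂ) (N : ℕ) (θ : ℝ) : ℂ :=
  ∑ k ∈ range N, a k * exp (k * θ * I)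

@[fun_prop]
theorem continuous_trigPolynomial (a : ℕ → ℂ) (N : ℕ) : Continuous (trigPolynomial a N) := by
  unfold trigPolynomial; fun_prop

theorem integral_exp_mul_normSq_trigPolynomial (a : ℕ → ℂ) (N m : ℕ)
    (ha : ∀ k, N ≤ k → a k = 0) :
    ∫ θ in (-π)..π, exp (m * θ * I) * normSq (trigPolynomial a N θ)
      = 2 * π * ∑ k ∈ range N, a k * conj (a (k + m)) := by
  have hexpand : ∀ θ : ℝ, exp (m * θ * I) * normSq (trigPolynomial a N θ)
      = ∑ k ∈ range N, ∑ l ∈ range N,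
          a k * conj (a l) * exp (((k + m - l : ℤ) : ℂ) * θ * I) := by
    intro θ
    rw [← mul_conj, trigPolynomial, map_sum, sum_mul_sum, mul_sum]
    refine sum_congr rfl fun k _ => ?_
    rw [mul_sum]
    refine sum_congr rfl fun l _ => ?_
    simp only [map_mul, ← exp_conj, map_natCast, conj_ofReal, conj_I]
    rw [show ((k + m - l : ℤ) : ℂ) * θ * I = m * θ * I + k * θ * I + l * θ * -I by push_cast; ring,
      Complex.exp_add, Complex.exp_add]
    ring
  have hcont : ∀ k l : ℕ, Continuous fun θ : ℝ =>
      a k * conj (a l) * exp (((k + m - l : ℤ) : ℂ) * θ * I) := by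
    intro k l; fun_prop
  simp_rw [hexpand]
  rw [intervalIntegral.integral_finsetSum fun k _ =>
    (continuous_finsetSum _ fun l _ => hcont k l).intervalIntegrable _ _, mul_sum]
  refine sum_congr rfl fun k _ => ?_
  rw [intervalIntegral.integral_finsetSum fun l _ => (hcont k l).intervalIntegrable _ _]
  simp_rw [intervalIntegral.integral_const_mul, integral_exp_int_mul_mul_I,
    show ∀ l : ℕ, ((k : ℤ) + m - l = 0 ↔ k + m = l) from fun l => by omega]
  simp only [mul_ite, mul_zero, sum_ite_eq, mem_range]
  split_ifs with h
  · ring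
  · rw [ha _ (not_lt.mp h), map_zero, mul_zero, mul_zero]

theorem integral_cos_mul_normSq_trigPolynomial (a : ℕ → ℝ) (N m : ℕ)
    (ha : ∀ k, N ≤ k → a k = 0) :
    ∫ θ in (-π)..π, Real.cos (m * θ) * normSq (trigPolynomial (fun k => a k) N θ)
      = 2 * π * ∑ k ∈ range N, a k * a (k + m) := by
  have hre : ∀ θ : ℝ, Real.cos (m * θ) * normSq (trigPolynomial (fun k => a k) N θ)
      = RCLike.re (exp (m * θ * I) * normSq (trigPolynomial (fun k => a k) N θ)) := by
    intro θ
    rw [RCLike.re_to_complex, re_mul_ofReal, ← ofReal_natCast, ← ofReal_mul, exp_ofReal_mul_I_re]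
  simp_rw [hre]
  rw [intervalIntegral.intervalIntegral_re
      (Continuous.intervalIntegrable (by fun_prop) _ _),
    integral_exp_mul_normSq_trigPolynomial _ _ _ (fun k hk => by simp [ha k hk])]
  simp [← ofReal_mul]

noncomputable def binomialTerm (n : ℕ) (c s : ℝ) (k : ℕ) : ℝ :=
  n.choose k * c ^ k * s ^ (n - k)

theorem binomialTerm_eq_zero_of_lt {n k : ℕ} (c s : ℝ) (h : n < k) :
    binomialTerm n c s k = 0 := by
  simp [binomialTerm, Nat.choose_eq_zero_of_lt h]

theorem trigPolynomial_binomialTerm (n : ℕ) (c s θ : ℝ) :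
    trigPolynomial (fun k => binomialTerm n c s k) (n + 1) θ = (c * exp (θ * I) + s) ^ n := by
  rw [add_pow, trigPolynomial]
  refine sum_congr rfl fun k _ => ?_
  rw [binomialTerm, mul_assoc (k : ℂ), Complex.exp_nat_mul]
  push_cast; ring

theorem normSq_mul_exp_add (c s θ : ℝ) :
    normSq (c * exp (θ * I) + s) = c ^ 2 + s ^ 2 + 2 * c * s * Real.cos θ := by
  rw [normSq_apply]
  simp only [add_re, mul_re, ofReal_re, exp_ofReal_mul_I_re, ofReal_im, exp_ofReal_mul_I_im,
    zero_mul, sub_zero, add_im, mul_im, add_zero]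
  nlinarith [Real.sin_sq_add_cos_sq θ]

theorem integral_sin_sq_mul_pow (n : ℕ) (c s : ℝ) (hcs : c ^ 2 + s ^ 2 = 1) :
    ∫ θ in (-π)..π, Real.sin θ ^ 2 * (2 * (c * s) * Real.cos θ + 1) ^ n
      = π * (∑ k ∈ range (n + 1), binomialTerm n c s k ^ 2
          - ∑ k ∈ range (n + 1), binomialTerm n c s k * binomialTerm n c s (k + 2)) := by
  let Q := trigPolynomial (fun k => binomialTerm n c s k) (n + 1)
  have hpoint : ∀ θ : ℝ, Real.sin θ ^ 2 * (2 * (c * s) * Real.cos θ + 1) ^ n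
      = 1 / 2 * (Real.cos ((0 : ℕ) * θ) * normSq (Q θ))
        - 1 / 2 * (Real.cos ((2 : ℕ) * θ) * normSq (Q θ)) := by
    intro θ
    rw [show Q θ = _ from trigPolynomial_binomialTerm n c s θ, map_pow, normSq_mul_exp_add, hcs,
      Nat.cast_zero, zero_mul, Real.cos_zero, Nat.cast_ofNat, Real.cos_two_mul, Real.sin_sq]
    ring
  have hB : ∀ k, n + 1 ≤ k → binomialTerm n c s k = 0 := fun k hk =>
    binomialTerm_eq_zero_of_lt c s hk
  simp_rw [hpoint]
  rw [intervalIntegral.integral_sub ((by fun_prop : Continuous _).intervalIntegrable _ _)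
      ((by fun_prop : Continuous _).intervalIntegrable _ _),
    intervalIntegral.integral_const_mul, intervalIntegral.integral_const_mul,
    integral_cos_mul_normSq_trigPolynomial _ _ _ hB, integral_cos_mul_normSq_trigPolynomial _ _ _ hB]
  simp only [add_zero, sq]
  ring

theorem mul_sum_binomialTerm_sq (n : ℕ) (c s : ℝ) :
    c ^ 2 * s ^ 2 * ∑ k ∈ range (n + 1), binomialTerm n c s k ^ 2
      = ∑ j ∈ range (n + 1), (n.choose j : ℝ) ^ 2 * (c ^ 2) ^ (j + 1) * (s ^ 2) ^ (n + 1 - j) := by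
  rw [mul_sum]
  refine sum_congr rfl fun j hj => ?_
  obtain ⟨i, rfl⟩ : ∃ i, n = j + i := ⟨n - j, by grind⟩
  rw [binomialTerm, Nat.add_sub_cancel_left, show j + i + 1 - j = i + 1 by omega]
  ring

theorem mul_sum_binomialTerm_mul_binomialTerm_add_two (n : ℕ) (c s : ℝ) :
    c ^ 2 * s ^ 2 * ∑ k ∈ range (n + 1), binomialTerm n c s k * binomialTerm n c s (k + 2)
      = ∑ j ∈ range (n + 1), (if j = 0 then 0 else (n.choose (j - 1) : ℝ)) *
          n.choose (j + 1) * (c ^ 2) ^ (j + 1) * (s ^ 2) ^ (n + 1 - j) := by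
  conv_lhs => rw [sum_range_succ, binomialTerm_eq_zero_of_lt c s (by omega : n < n + 2),
    mul_zero, add_zero, mul_sum]
  conv_rhs => rw [sum_range_succ', if_pos rfl, zero_mul, zero_mul, zero_mul, add_zero]
  refine sum_congr rfl fun k _ => ?_
  rw [if_neg k.succ_ne_zero, Nat.add_sub_cancel]
  rcases le_or_gt (k + 2) n with hkn | hkn
  · obtain ⟨i, rfl⟩ : ∃ i, n = k + 2 + i := ⟨n - (k + 2), by omega⟩
    rw [binomialTerm, binomialTerm, show k + 2 + i - k = i + 2 by omega,
      show k + 2 + i - (k + 2) = i by omega, show k + 2 + i + 1 - (k + 1) = i + 2 by omega]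
    ring
  · rw [binomialTerm_eq_zero_of_lt c s hkn, Nat.choose_eq_zero_of_lt (by omega : n < k + 1 + 1)]
    ring

/-- The trigonometric integral identity
`(2κ(1-κ)/π)·∫_{-π}^{π} sin²θ (2√(κ(1-κ)) cos θ + 1)^{l-1} dθ
  = 2·∑_{j=0}^{l-1} [C(l-1,j)² - C(l-1,j-1)C(l-1,j+1)] κ^{j+1}(1-κ)^{l-j}`. -/
theorem trig_integral_eq_binomial_sum (κ : ℝ) (h0 : 0 < κ) (h1 : κ < 1) (l : ℕ)
    (hl : 1 ≤ l) :
    (2 * κ * (1 - κ) / Real.pi) *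
        ∫ θ in (-Real.pi)..Real.pi,
          Real.sin θ ^ 2 * (2 * Real.sqrt (κ * (1 - κ)) * Real.cos θ + 1) ^ (l - 1)
      = 2 * ∑ j ∈ Finset.range l,
          (((l - 1).choose j : ℝ) ^ 2 -
              (if j = 0 then 0 else ((l - 1).choose (j - 1) : ℝ)) *
                ((l - 1).choose (j + 1) : ℝ))
            * κ ^ (j + 1) * (1 - κ) ^ (l - j) := by
  obtain ⟨n, rfl⟩ : ∃ n, l = n + 1 := ⟨l - 1, by omega⟩
  set c := √κ
  set s := √(1 - κ)
  have hc : c ^ 2 = κ := sq_sqrt h0.le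
  have hs : s ^ 2 = 1 - κ := sq_sqrt (by linarith)
  have hsq := mul_sum_binomialTerm_sq n c s
  have hcross := mul_sum_binomialTerm_mul_binomialTerm_add_two n c s
  rw [hc, hs] at hsq hcross
  rw [Nat.add_sub_cancel, sqrt_mul h0.le, integral_sin_sq_mul_pow n c s (by rw [hc, hs]; ring)]
  simp only [sub_mul, sum_sub_distrib]
  rw [← hsq, ← hcross]
  field_simp
end

section
/- Let s(n), t(n) ≤ C·n, let ~_n be an equivalence relation on I_{s(n)} × I_{t(n)} satisfying: (MP2) for all (p,q) and p', #{q' : (p,q) ~_n (p',q')} ≤ B, and symmetrically for rows. Then for any partition p of {1,...,2k}, the number of pairs (φ, ψ), with φ : {1,...,2k} → I_{s(n)} constant on blocks of m and ψ : {1,...,2k} → I_{t(n)} constant on blocks of n, such that (φ(i),ψ(i)) ~_n (φ(j),ψ(j)) whenever i ~_p j, is at most O(n^{|p|+1}) (with constant depending on k, B, C only). -/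
open Finset

section SequentialCounting

variable {α : Type*} [DecidableEq α] {N : ℕ}

def nextValues (S : Finset (Fin N → α)) (f : Fin N → α) (i : Fin N) : Finset α :=
  {g ∈ S | ∀ j < i, g j = f j}.image (· i)

lemma nextValues_init_subset (S : Finset (Fin (N + 1) → α)) (f : Fin (N + 1) → α) (i : Fin N) :
    nextValues (S.image Fin.init) (Fin.init f) i ⊆ nextValues S f i.castSucc := by
  simp only [nextValues, subset_iff, mem_image, mem_filter]
  rintro _ ⟨_, ⟨⟨g, hg, rfl⟩, hagree⟩, rfl⟩
  refine ⟨g, ⟨hg, fun j hj => ?_⟩, rfl⟩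
  obtain ⟨j, rfl⟩ := Fin.exists_castSucc_eq.mpr (Fin.ne_last_of_lt hj)
  exact hagree j (Fin.castSucc_lt_castSucc_iff.mp hj)

lemma card_filter_init_eq_le (S : Finset (Fin (N + 1) → α)) (f : Fin (N + 1) → α) :
    #{g ∈ S | Fin.init g = Fin.init f} ≤ #(nextValues S f (Fin.last N)) := by
  refine card_le_card_of_injOn (· (Fin.last N)) (fun g hg => ?_) (fun g hg g' hg' hlast => ?_)
  · simp only [coe_filter, Set.mem_ofPred_eq] at hg
    refine mem_image.mpr ⟨g, mem_filter.mpr ⟨hg.1, fun j hj => ?_⟩, rfl⟩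
    obtain ⟨j, rfl⟩ := Fin.exists_castSucc_eq.mpr hj.ne
    exact congrFun hg.2 j
  · simp only [coe_filter, Set.mem_ofPred_eq] at hg hg'
    rw [← Fin.snoc_init_self g, ← Fin.snoc_init_self g', hg.2, hg'.2]
    exact congrArg _ hlast

theorem card_le_prod_of_card_nextValues_le (S : Finset (Fin N → α)) (b : Fin N → ℕ)
    (h : ∀ i, ∀ f ∈ S, #(nextValues S f i) ≤ b i) : #S ≤ ∏ i, b i := by
  induction N with
  | zero => simpa using card_le_one_of_subsingleton S
  | succ N ih =>
    have hfiber : ∀ f' ∈ S.image Fin.init, #{g ∈ S | Fin.init g = f'} ≤ b (Fin.last N) := by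
      rintro _ hf'
      obtain ⟨f, hf, rfl⟩ := mem_image.mp hf'
      exact (card_filter_init_eq_le S f).trans (h _ f hf)
    have hinit : #(S.image Fin.init) ≤ ∏ i : Fin N, b i.castSucc := by
      refine ih _ _ fun i _ hf' => ?_
      obtain ⟨f, hf, rfl⟩ := mem_image.mp hf'
      exact (card_le_card (nextValues_init_subset S f i)).trans (h _ f hf)
    calc #S ≤ b (Fin.last N) * #(S.image Fin.init) := card_le_mul_card_image S _ hfiber
      _ ≤ b (Fin.last N) * ∏ i : Fin N, b i.castSucc := by gcongr
      _ = ∏ i, b i := by rw [Fin.prod_univ_castSucc, mul_comm]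

end SequentialCounting

theorem Setoid.ncard_classes_eq_ncard_setOf_isMin {ι : Type*} [LinearOrder ι] [WellFoundedLT ι]
    (p : Setoid ι) : p.classes.ncard = {i | ∀ j < i, ¬ p j i}.ncard := by
  have himage : p.classes = (fun i => {x | p x i}) '' {i | ∀ j < i, ¬ p j i} := by
    ext c
    refine ⟨?_, fun ⟨i, _, hc⟩ => ⟨i, hc.symm⟩⟩
    rintro ⟨y, rfl⟩
    obtain ⟨i, hiy, hmin⟩ := wellFounded_lt.has_min {x | p x y} ⟨y, p.refl y⟩
    refine ⟨i, fun j hj hji => hmin j (p.trans hji hiy) hj, ?_⟩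
    ext x
    exact ⟨fun hx => p.trans hx hiy, fun hx => p.trans hx (p.symm hiy)⟩
  rw [himage, Set.InjOn.ncard_image]
  intro i hi i' hi' heq
  have hii' : p i i' := (Set.ext_iff.mp heq i).mp (p.refl i)
  rcases lt_trichotomy i i' with hlt | heq | hlt
  · exact absurd hii' (hi' i hlt)
  · exact heq
  · exact absurd (p.symm hii') (hi i' hlt)

lemma mSetoid_rel_or_nSetoid_rel_of_val_succ_eq {k : ℕ} {i j : Fin (2 * k)}
    (h : j.val + 1 = i.val) : (mSetoid k).r j i ∨ (nSetoid k).r j i := by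
  rcases Nat.even_or_odd i.val with ⟨m, hm⟩ | ⟨m, hm⟩
  · right
    show (j.val + 1) / 2 % k = (i.val + 1) / 2 % k
    rw [show (j.val + 1) / 2 = (i.val + 1) / 2 by omega]
  · left
    show j.val / 2 = i.val / 2
    omega

lemma card_le_ncard_of_forall_fst_eq {α β : Type*} [Finite β] {E : Finset (α × β)} {a : α}
    (hE : ∀ x ∈ E, x.1 = a) {T : Set β} (hT : ∀ x ∈ E, x.2 ∈ T) : #E ≤ T.ncard := by
  rw [← Set.ncard_coe_finset]
  exact Set.ncard_le_ncard_of_injOn Prod.snd hT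
    (fun x hx y hy h => Prod.ext ((hE x hx).trans (hE y hy).symm) h) (Set.toFinite T)

lemma card_le_ncard_of_forall_snd_eq {α β : Type*} [Finite α] {E : Finset (α × β)} {b : β}
    (hE : ∀ x ∈ E, x.2 = b) {T : Set α} (hT : ∀ x ∈ E, x.1 ∈ T) : #E ≤ T.ncard := by
  rw [← Set.ncard_coe_finset]
  exact Set.ncard_le_ncard_of_injOn Prod.fst hT
    (fun x hx y hy h => Prod.ext h ((hE x hx).trans (hE y hy).symm)) (Set.toFinite T)

section Admissible

variable {α β : Type*}

/-- `f i = (φ i, ψ i)`: the pair `(φ, ψ)` is encoded as a single function into `α × β`. -/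
def IsAdmissible (k : ℕ) (p : Setoid (Fin (2 * k))) (r : α × β → α × β → Prop)
    (f : Fin (2 * k) → α × β) : Prop :=
  (∀ i j, (mSetoid k).r i j → (f i).1 = (f j).1) ∧
  (∀ i j, (nSetoid k).r i j → (f i).2 = (f j).2) ∧
  ∀ i j, p.r i j → r (f i) (f j)

variable [DecidableEq α] [DecidableEq β] {k : ℕ} {p : Setoid (Fin (2 * k))} {r : α × β → α × β → Prop}
  {S : Finset (Fin (2 * k) → α × β)} {f : Fin (2 * k) → α × β} {i : Fin (2 * k)}

lemma fst_const_or_snd_const_on_nextValues (hS : ∀ g ∈ S, IsAdmissible k p r g)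
    (hi : i.val ≠ 0) :
    (∃ a, ∀ x ∈ nextValues S f i, x.1 = a) ∨ (∃ b, ∀ x ∈ nextValues S f i, x.2 = b) := by
  set j : Fin (2 * k) := ⟨i.val - 1, by omega⟩
  have hji : j < i := Fin.lt_def.mpr (by simp only [j]; omega)
  simp only [nextValues, mem_image, mem_filter]
  rcases mSetoid_rel_or_nSetoid_rel_of_val_succ_eq (i := i) (j := j) (by simp only [j]; omega)
    with hm | hn
  · refine .inl ⟨(f j).1, ?_⟩
    rintro _ ⟨g, ⟨hg, hagree⟩, rfl⟩
    rw [← hagree j hji, (hS g hg).1 j i hm]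
  · refine .inr ⟨(f j).2, ?_⟩
    rintro _ ⟨g, ⟨hg, hagree⟩, rfl⟩
    rw [← hagree j hji, (hS g hg).2.1 j i hn]

lemma rel_of_mem_nextValues (hS : ∀ g ∈ S, IsAdmissible k p r g) {j : Fin (2 * k)}
    (hji : j < i) (hp : p.r j i) {x : α × β} (hx : x ∈ nextValues S f i) : r (f j) x := by
  obtain ⟨g, hg, rfl⟩ := mem_image.mp hx
  rw [mem_filter] at hg
  rw [← hg.2 j hji]
  exact (hS g hg.1).2.2 j i hp

lemma card_nextValues_le_of_ne_zero [Fintype α] [Fintype β] {M : ℕ}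
    (hα : Fintype.card α ≤ M) (hβ : Fintype.card β ≤ M) (hS : ∀ g ∈ S, IsAdmissible k p r g)
    (hi : i.val ≠ 0) : #(nextValues S f i) ≤ M := by
  rcases fst_const_or_snd_const_on_nextValues (f := f) hS hi with ⟨a, ha⟩ | ⟨b, hb⟩
  · calc _ ≤ (Set.univ : Set β).ncard := card_le_ncard_of_forall_fst_eq ha fun _ _ => trivial
      _ ≤ M := by rwa [Set.ncard_univ, Nat.card_eq_fintype_card]
  · calc _ ≤ (Set.univ : Set α).ncard := card_le_ncard_of_forall_snd_eq hb fun _ _ => trivial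
      _ ≤ M := by rwa [Set.ncard_univ, Nat.card_eq_fintype_card]

lemma card_nextValues_le_of_rel [Finite α] [Finite β] {B : ℕ}
    (hB₁ : ∀ a q a', {q' | r (a, q) (a', q')}.ncard ≤ B)
    (hB₂ : ∀ a q q', {a' | r (a, q) (a', q')}.ncard ≤ B)
    (hS : ∀ g ∈ S, IsAdmissible k p r g) {j : Fin (2 * k)} (hji : j < i) (hp : p.r j i) :
    #(nextValues S f i) ≤ B := by
  have hi : i.val ≠ 0 := (Nat.zero_le j.val).trans_lt hji |>.ne'
  have hrel := fun x hx => rel_of_mem_nextValues (f := f) hS hji hp (x := x) hx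
  rcases fst_const_or_snd_const_on_nextValues (f := f) hS hi with ⟨a, ha⟩ | ⟨b, hb⟩
  · refine (card_le_ncard_of_forall_fst_eq ha fun x hx => ?_).trans (hB₁ (f j).1 (f j).2 a)
    simpa [← ha x hx] using hrel x hx
  · refine (card_le_ncard_of_forall_snd_eq hb fun x hx => ?_).trans (hB₂ (f j).1 (f j).2 b)
    simpa [← hb x hx] using hrel x hx

lemma card_nextValues_le [Fintype α] [Fintype β] [DecidableRel p.r] {M B : ℕ}
    (hα : Fintype.card α ≤ M) (hβ : Fintype.card β ≤ M)
    (hB₁ : ∀ a q a', {q' | r (a, q) (a', q')}.ncard ≤ B)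
    (hB₂ : ∀ a q q', {a' | r (a, q) (a', q')}.ncard ≤ B)
    (hS : ∀ g ∈ S, IsAdmissible k p r g) :
    #(nextValues S f i) ≤ (if ∀ j < i, ¬ p.r j i then M else B) * (if i.val = 0 then M else 1) := by
  by_cases h0 : i.val = 0
  · have hmin : ∀ j < i, ¬ p.r j i := fun j hj => absurd hj (by simp [Fin.lt_def, h0])
    rw [if_pos hmin, if_pos h0]
    calc _ ≤ Fintype.card (α × β) := card_le_univ _
      _ ≤ M * M := by rw [Fintype.card_prod]; exact Nat.mul_le_mul hα hβ
  · rw [if_neg h0, mul_one]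
    split_ifs with hmin
    · exact card_nextValues_le_of_ne_zero hα hβ hS h0
    · obtain ⟨j, hji, hp⟩ : ∃ j < i, p.r j i := by simpa using hmin
      exact card_nextValues_le_of_rel hB₁ hB₂ hS hji hp

end Admissible

lemma prod_ite_mul_ite_val_eq_zero {N : ℕ} (hN : 0 < N) (P : Fin N → Prop) [DecidablePred P]
    (M B : ℕ) :
    ∏ i : Fin N, (if P i then M else B) * (if i.val = 0 then M else 1) =
      M ^ #{i | P i} * B ^ #{i | ¬ P i} * M := by
  rw [prod_mul_distrib, prod_ite, prod_const, prod_const, prod_eq_single ⟨0, hN⟩]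
  · simp
  · intro i _ hi
    rw [if_neg (fun h => hi (Fin.ext h))]
  · simp

lemma Nat.pow_le_succ_pow_of_le {a m n : ℕ} (h : m ≤ n) : a ^ m ≤ (a + 1) ^ n :=
  (Nat.pow_le_pow_left a.le_succ m).trans (Nat.pow_le_pow_right a.succ_pos h)

/-- Lemma (basic counting bound): under (MP2), for any partition `p` of `{1,…,2k}` the
number of pairs `(φ,ψ)` with `φ` constant on blocks of `m`, `ψ` constant on blocks of
`n`, and `(φ(i),ψ(i)) ~ (φ(j),ψ(j))` whenever `i ~_p j`, is `O(n^{|p|+1})`, with a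
constant depending only on `k`, `B`, `C`. -/
theorem count_constrained_pairs_le (k B C : ℕ) (hk : 1 ≤ k) :
    ∃ D : ℕ, ∀ (s t : ℕ → ℕ) (R : ∀ n, Setoid (Fin (s n) × Fin (t n)))
      (p : Setoid (Fin (2 * k))) (n : ℕ),
      s n ≤ C * n → t n ≤ C * n →
      (∀ (a : Fin (s n)) (q : Fin (t n)) (a' : Fin (s n)),
        {q' : Fin (t n) | (R n).r (a, q) (a', q')}.ncard ≤ B) →
      (∀ (a : Fin (s n)) (q q' : Fin (t n)),
        {a' : Fin (s n) | (R n).r (a, q) (a', q')}.ncard ≤ B) →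
      {fp : (Fin (2 * k) → Fin (s n)) × (Fin (2 * k) → Fin (t n)) |
          (∀ i j, (mSetoid k).r i j → fp.1 i = fp.1 j) ∧
          (∀ i j, (nSetoid k).r i j → fp.2 i = fp.2 j) ∧
          (∀ i j, p.r i j → (R n).r (fp.1 i, fp.2 i) (fp.1 j, fp.2 j))}.ncard
        ≤ D * n ^ (p.classes.ncard + 1) := by
  refine ⟨(C + 1) ^ (2 * k + 1) * (B + 1) ^ (2 * k), fun s t R p n hs ht hB₁ hB₂ => ?_⟩
  classical
  set S := (univ : Finset (Fin (2 * k) → Fin (s n) × Fin (t n))).filter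
    (IsAdmissible k p (R n).r)
  set c := #{i : Fin (2 * k) | ∀ j < i, ¬ p.r j i}
  set c' := #{i : Fin (2 * k) | ¬ ∀ j < i, ¬ p.r j i}
  have hclasses : p.classes.ncard = c := by
    rw [Setoid.ncard_classes_eq_ncard_setOf_isMin, ← coe_filter_univ, Set.ncard_coe_finset]
  have hc : c ≤ 2 * k := (card_filter_le _ _).trans (by simp)
  have hc' : c' ≤ 2 * k := (card_filter_le _ _).trans (by simp)
  calc _ = #S := by
        rw [← Set.ncard_coe_finset,
          ← Set.ncard_image_of_injective _ (Equiv.arrowProdEquivProdArrow _ _ _).injective,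
          Equiv.image_eq_preimage_symm, coe_filter_univ]
        rfl
    _ ≤ ∏ i, (if ∀ j < i, ¬ p.r j i then C * n else B) * (if i.val = 0 then C * n else 1) :=
        card_le_prod_of_card_nextValues_le S _ fun i f _ =>
          card_nextValues_le (by simpa using hs) (by simpa using ht) hB₁ hB₂
            fun g hg => (mem_filter.mp hg).2
    _ = C ^ (c + 1) * B ^ c' * n ^ (c + 1) := by
        rw [prod_ite_mul_ite_val_eq_zero (by omega)]; ring
    _ ≤ (C + 1) ^ (2 * k + 1) * (B + 1) ^ (2 * k) * n ^ (p.classes.ncard + 1) := by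
        rw [hclasses]
        gcongr ?_ * ?_ * _
        exacts [Nat.pow_le_succ_pow_of_le (by omega), Nat.pow_le_succ_pow_of_le hc']
end

section
/- Under the hypotheses (MP1),(MP2),(MP3) on the equivalence relations ~_n on I_{s(n)} × I_{t(n)}, with s(n)/n → κ and t(n)/n → μ (κ, μ > 0): if p is a crossing pair partition of {1,...,2k}, then #S_n(p) = o(n^{k+1}), where S_n(p) is the set of pairs (φ,ψ) with φ constant on blocks of m, ψ constant on blocks of n, and (φ(i),ψ(i)) ~_n (φ(j),ψ(j)) if and only if i ~_p j. -/
/-!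
Encode `(φ, ψ)` as `g i = (φ i, ψ i)`. Consecutive edges `i, i + 1` of the cycle `0, 1, …, 2k - 1, 0`
lie in a common block of `m` or of `n`, so `g i` and `g (i + 1)` share their first or their second
coordinate. Let `c₁ < c₂ < c₃ < c₄` with `c₁ ~ c₃` and `c₂ ~ c₄` be a crossing of `p`. The related
pair `(g c₁, g c₃)` can be chosen in at most `s · o(n²)` ways by (MP1). Now sweep the four arcs
between the `cᵢ`, starting next to `c₁` and `c₃` and stopping before `c₂` and `c₄`: each new edge
shares a coordinate with a known neighbour, so its value has at most `s + t` choices, and at most `B`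
by (MP2) once its partner under `p` is known. The `2k - 4` swept edges form `k - 2` pairs, and in each
pair the later edge is of the second kind, so the sweep contributes at most `(B (s + t))^(k-2)`.
Finally `g c₂` and `g c₄` are determined by their two neighbours. Hence
`#S_n(p) ≤ (B (s + t))^(k-2) · s · o(n²) = o(n^(k+1))`.
-/

open Finset Filter Topology

section SuccessiveChoice

variable {ι α : Type*}

def BoundedChoice (A : Finset (ι → α)) (D : Finset ι) (u : ι) (m : ℕ) : Prop :=
  ∀ f ∈ A, ∃ V : Set α, V.ncard ≤ m ∧ ∀ g ∈ A, (∀ i ∈ D, g i = f i) → g u ∈ V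

theorem BoundedChoice.mono {A : Finset (ι → α)} {D D' : Finset ι} {u : ι} {m m' : ℕ}
    (h : BoundedChoice A D u m) (hD : D ⊆ D') (hm : m ≤ m') : BoundedChoice A D' u m' := by
  intro f hf
  obtain ⟨V, hV, hmem⟩ := h f hf
  exact ⟨V, hV.trans hm, fun g hg hgf => hmem g hg fun i hi => hgf i (hD hi)⟩

variable [DecidableEq ι] [DecidableEq α] [Finite α]

theorem card_image_restrict_insert_le {A : Finset (ι → α)} {D : Finset ι} {u : ι} {m : ℕ}
    (h : BoundedChoice A D u m) :
    #(A.image (insert u D).restrict) ≤ m * #(A.image D.restrict) := by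
  have hsub : D ⊆ insert u D := subset_insert u D
  rw [← restrict₂_comp_restrict hsub, ← image_image]
  refine card_le_mul_card_image _ m fun y hy => ?_
  simp only [mem_image] at hy
  obtain ⟨_, ⟨f, hf, rfl⟩, rfl⟩ := hy
  obtain ⟨V, hV, hmem⟩ := h f hf
  rw [← Set.ncard_coe_finset]
  refine le_trans (Set.ncard_le_ncard_of_injOn (fun x => x ⟨u, mem_insert_self u D⟩) ?_ ?_
    (Set.toFinite V)) hV
  · intro x hx
    simp only [coe_filter, mem_image, Set.mem_ofPred_eq] at hx
    obtain ⟨⟨g, hg, rfl⟩, hgf⟩ := hx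
    exact hmem g hg fun i hi => congrFun hgf ⟨i, hi⟩
  · intro x hx x' hx' hxx'
    simp only [coe_filter, mem_image, Set.mem_ofPred_eq] at hx hx'
    obtain ⟨⟨g, hg, rfl⟩, hgf⟩ := hx
    obtain ⟨⟨g', hg', rfl⟩, hg'f⟩ := hx'
    funext ⟨i, hi⟩
    rcases mem_insert.mp hi with rfl | hi
    · exact hxx'
    · exact (congrFun hgf ⟨i, hi⟩).trans (congrFun hg'f ⟨i, hi⟩).symm

theorem card_image_restrict_union_le_prod {A : Finset (ι → α)} {D E : Finset ι}
    {rank : ι → ℕ} (hrank : Set.InjOn rank E) {c : ι → ℕ}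
    (hc : ∀ u ∈ E, BoundedChoice A (D ∪ {v ∈ E | rank v < rank u}) u (c u)) :
    #(A.image (D ∪ E).restrict) ≤ (∏ u ∈ E, c u) * #(A.image D.restrict) := by
  induction E using Finset.induction_on_max_value rank with
  | empty => rw [union_empty, prod_empty, one_mul]
  | insert a E haE hmax ih =>
    have hlt : ∀ v ∈ E, rank v < rank a := fun v hv => (hmax v hv).lt_of_ne fun h =>
      haE (hrank (mem_insert_of_mem hv) (mem_insert_self a E) h ▸ hv)
    have hbefore_a : {v ∈ insert a E | rank v < rank a} = E := by
      rw [filter_insert, if_neg (lt_irrefl _)]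
      exact filter_true_of_mem hlt
    have hbefore : ∀ u ∈ E,
        {v ∈ insert a E | rank v < rank u} = {v ∈ E | rank v < rank u} := fun u hu => by
      rw [filter_insert, if_neg (hmax u hu).not_gt]
    have ihE := ih (hrank.mono (subset_insert a E)) fun u hu =>
      hbefore u hu ▸ hc u (mem_insert_of_mem hu)
    calc #(A.image (D ∪ insert a E).restrict)
        = #(A.image (insert a (D ∪ E)).restrict) := by rw [union_insert]
      _ ≤ c a * #(A.image (D ∪ E).restrict) :=
        card_image_restrict_insert_le (hbefore_a ▸ hc a (mem_insert_self a E))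
      _ ≤ c a * ((∏ u ∈ E, c u) * #(A.image D.restrict)) := Nat.mul_le_mul_left _ ihE
      _ = (∏ u ∈ insert a E, c u) * #(A.image D.restrict) := by rw [prod_insert haE, mul_assoc]

theorem card_image_restrict_pair_le {A : Finset (ι → α)} {r : α → α → Prop} {a b : ι}
    (h : ∀ g ∈ A, r (g a) (g b)) :
    #(A.image ({a, b} : Finset ι).restrict) ≤ {x : α × α | r x.1 x.2}.ncard := by
  rw [← Set.ncard_coe_finset]
  refine Set.ncard_le_ncard_of_injOn (fun y => (y ⟨a, by simp⟩, y ⟨b, by simp⟩)) ?_ ?_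
    (Set.toFinite _)
  · intro y hy
    obtain ⟨g, hg, rfl⟩ := mem_image.mp hy
    exact h g hg
  · intro y hy y' hy' hyy'
    obtain ⟨g, -, rfl⟩ := mem_image.mp hy
    obtain ⟨g', -, rfl⟩ := mem_image.mp hy'
    simp only [Prod.mk.injEq] at hyy'
    funext ⟨i, hi⟩
    rcases mem_insert.mp hi with rfl | hi
    · exact hyy'.1
    · exact (mem_singleton.mp hi) ▸ hyy'.2

end SuccessiveChoice

section ProductChoice

variable {ι S T : Type*} {A : Finset (ι → S × T)} {D : Finset ι} {u v w : ι}

theorem BoundedChoice.of_fst_eq [Finite T] (hv : v ∈ D) (h : ∀ g ∈ A, (g u).1 = (g v).1) :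
    BoundedChoice A D u (Nat.card T) := by
  intro f _
  refine ⟨Prod.mk (f v).1 '' Set.univ, (Set.ncard_image_le (Set.toFinite _)).trans
    (Set.ncard_univ T).le, fun g hg hgf => ⟨(g u).2, trivial, ?_⟩⟩
  rw [← hgf v hv, ← h g hg]

theorem BoundedChoice.of_snd_eq [Finite S] (hv : v ∈ D) (h : ∀ g ∈ A, (g u).2 = (g v).2) :
    BoundedChoice A D u (Nat.card S) := by
  intro f _
  refine ⟨(·, (f v).2) '' Set.univ, (Set.ncard_image_le (Set.toFinite _)).trans
    (Set.ncard_univ S).le, fun g hg hgf => ⟨(g u).1, trivial, ?_⟩⟩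
  rw [← hgf v hv, ← h g hg]

variable {r : S × T → S × T → Prop} {B : ℕ}

theorem BoundedChoice.of_fst_eq_of_rel [Finite T] (hB : ∀ P a, {q | r P (a, q)}.ncard ≤ B)
    (hv : v ∈ D) (hw : w ∈ D) (h : ∀ g ∈ A, (g u).1 = (g v).1) (hr : ∀ g ∈ A, r (g w) (g u)) :
    BoundedChoice A D u B := by
  intro f _
  refine ⟨Prod.mk (f v).1 '' {q | r (f w) ((f v).1, q)},
    (Set.ncard_image_le (Set.toFinite _)).trans (hB _ _), fun g hg hgf => ⟨(g u).2, ?_, ?_⟩⟩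
  · rw [Set.mem_ofPred_eq, ← hgf w hw, ← hgf v hv, ← h g hg]
    exact hr g hg
  · rw [← hgf v hv, ← h g hg]

theorem BoundedChoice.of_snd_eq_of_rel [Finite S] (hB : ∀ P q, {a | r P (a, q)}.ncard ≤ B)
    (hv : v ∈ D) (hw : w ∈ D) (h : ∀ g ∈ A, (g u).2 = (g v).2) (hr : ∀ g ∈ A, r (g w) (g u)) :
    BoundedChoice A D u B := by
  intro f _
  refine ⟨(·, (f v).2) '' {a | r (f w) (a, (f v).2)},
    (Set.ncard_image_le (Set.toFinite _)).trans (hB _ _), fun g hg hgf => ⟨(g u).1, ?_, ?_⟩⟩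
  · rw [Set.mem_ofPred_eq, ← hgf w hw, ← hgf v hv, ← h g hg]
    exact hr g hg
  · rw [← hgf v hv, ← h g hg]

end ProductChoice

theorem card_filter_lt_comp_eq_card_filter_not {ι : Type*} {E : Finset ι} {σ : ι → ι}
    (hσ : Function.Involutive σ) (hσE : ∀ u ∈ E, σ u ∈ E) {r : ι → ℕ}
    (hr : ∀ u ∈ E, r (σ u) ≠ r u) :
    #{u ∈ E | r (σ u) < r u} = #{u ∈ E | ¬ r (σ u) < r u} := by
  refine card_nbij' σ σ (fun u hu => ?_) (fun u hu => ?_) (fun u _ => hσ u) (fun u _ => hσ u)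
  · simp only [coe_filter, Set.mem_ofPred_eq, hσ u] at hu ⊢
    exact ⟨hσE u hu.1, lt_asymm hu.2⟩
  · simp only [coe_filter, Set.mem_ofPred_eq, hσ u, not_lt] at hu ⊢
    exact ⟨hσE u hu.1, lt_of_le_of_ne hu.2 (hr u hu.1).symm⟩

theorem prod_ite_lt_comp_eq_mul_pow {ι M : Type*} [CommMonoid M] {E : Finset ι} {σ : ι → ι}
    (hσ : Function.Involutive σ) (hσE : ∀ u ∈ E, σ u ∈ E) {r : ι → ℕ}
    (hr : ∀ u ∈ E, r (σ u) ≠ r u) (b c : M) :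
    ∏ u ∈ E, (if r (σ u) < r u then b else c) = (b * c) ^ (#E / 2) := by
  have heq := card_filter_lt_comp_eq_card_filter_not hσ hσE hr
  have hsum := card_filter_add_card_filter_not (s := E) (fun u => r (σ u) < r u)
  rw [prod_ite, prod_const, prod_const, mul_pow, heq,
    show #{u ∈ E | ¬r (σ u) < r u} = #E / 2 by omega]

theorem ncard_rel_le_card_mul_sup {S T : Type*} [Fintype S] [Fintype T]
    (r : S × T → S × T → Prop) :
    {x : (S × T) × (S × T) | r x.1 x.2}.ncard ≤
      Fintype.card S *
        univ.sup fun a : S => {y : T × S × T | r (a, y.1) (y.2.1, y.2.2)}.ncard := by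
  classical
  set F : S → Finset ((S × T) × (S × T)) := fun a =>
    {y : T × S × T | r (a, y.1) (y.2.1, y.2.2)}.toFinset.image fun y => ((a, y.1), y.2)
  calc _ ≤ #(univ.biUnion F) := by
        rw [← Set.ncard_coe_finset]
        refine Set.ncard_le_ncard (fun x hx => ?_)
        simp only [coe_biUnion, coe_univ, Set.mem_univ, Set.iUnion_true, Set.mem_iUnion, F,
          coe_image, Set.coe_toFinset]
        exact ⟨x.1.1, (x.1.2, x.2), hx, rfl⟩
    _ ≤ #(univ : Finset S) * _ := card_biUnion_le_card_mul _ _ _ fun a _ =>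
        card_image_le.trans ((Set.ncard_eq_toFinset_card' _).symm.le.trans
          (le_sup (f := fun a : S => {y : T × S × T | r (a, y.1) (y.2.1, y.2.2)}.ncard)
            (mem_univ a)))

theorem IsPairPartition.exists_partner_s14 {N : ℕ} {p : Setoid (Fin N)} (hp : IsPairPartition p)
    (x : Fin N) : ∃ y, y ≠ x ∧ p.r x y ∧ ∀ z, p.r x z → z = x ∨ z = y := by
  have hcard : ({z | p.r z x} \ {x}).ncard = 1 := by
    rw [Set.ncard_sdiff_singleton_of_mem (s := {z | p.r z x}) (p.refl' x), hp _ ⟨x, rfl⟩]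
  obtain ⟨y, hy⟩ := Set.ncard_eq_one.mp hcard
  have hmem : ∀ z, z ∈ ({z | p.r z x} \ {x} : Set (Fin N)) ↔ z = y := fun z => by rw [hy]; rfl
  refine ⟨y, ((hmem y).mpr rfl).2, p.symm ((hmem y).mpr rfl).1, fun z hz => ?_⟩
  by_cases hzx : z = x
  · exact Or.inl hzx
  · exact Or.inr ((hmem z).mp ⟨p.symm hz, hzx⟩)

theorem IsPairPartition.exists_involutive_partner {N : ℕ} {p : Setoid (Fin N)}
    (hp : IsPairPartition p) :
    ∃ σ : Fin N → Fin N, Function.Involutive σ ∧ (∀ x, σ x ≠ x) ∧ (∀ x, p.r x (σ x)) ∧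
      ∀ x y, p.r x y → y = x ∨ y = σ x := by
  choose σ hne hr hσ using hp.exists_partner_s14
  exact ⟨σ, fun x => ((hσ (σ x) x (p.symm (hr x))).resolve_left (hne x).symm).symm, hne, hr, hσ⟩

def CycleSucc {N : ℕ} (u v : Fin N) : Prop :=
  v.val = u.val + 1 ∨ (u.val + 1 = N ∧ v.val = 0)

theorem exists_cycleSucc {N : ℕ} (u : Fin N) : ∃ v, CycleSucc u v := by
  by_cases h : u.val + 1 < N
  · exact ⟨⟨u.val + 1, h⟩, Or.inl rfl⟩
  · exact ⟨⟨0, by omega⟩, Or.inr ⟨by omega, rfl⟩⟩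

theorem exists_cycleSucc_to {N : ℕ} (u : Fin N) : ∃ w, CycleSucc w u := by
  by_cases h : u.val = 0
  · exact ⟨⟨N - 1, by omega⟩, Or.inr ⟨by simp only; omega, h⟩⟩
  · exact ⟨⟨u.val - 1, by omega⟩, Or.inl (by simp only; omega)⟩

section Cycle

variable {k : ℕ}

theorem mSetoid_r_iff {i j : Fin (2 * k)} : (mSetoid k).r i j ↔ i.val / 2 = j.val / 2 := Iff.rfl

theorem nSetoid_r_iff {i j : Fin (2 * k)} :
    (nSetoid k).r i j ↔ (i.val + 1) / 2 % k = (j.val + 1) / 2 % k := Iff.rfl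

theorem CycleSucc.even_mSetoid_or_odd_nSetoid {u v : Fin (2 * k)} (h : CycleSucc u v) :
    (Even u.val ∧ (mSetoid k).r u v) ∨ (Odd u.val ∧ (nSetoid k).r u v) := by
  rw [mSetoid_r_iff, nSetoid_r_iff]
  rcases Nat.even_or_odd u.val with hu | hu
  · rw [Nat.even_iff] at hu
    exact Or.inl ⟨Nat.even_iff.mpr hu, by unfold CycleSucc at h; omega⟩
  · refine Or.inr ⟨hu, ?_⟩
    rw [Nat.odd_iff] at hu
    rcases h with h | ⟨h, h0⟩
    · rw [h]; congr 1; omega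
    · rw [h0, show (u.val + 1) / 2 = k by omega, Nat.mod_self]; rfl

theorem mSetoid_or_nSetoid_of_cycleSucc {u v : Fin (2 * k)}
    (h : CycleSucc u v ∨ CycleSucc v u) :
    (mSetoid k).r u v ∨ (nSetoid k).r u v := by
  rcases h with h | h
  · rcases h.even_mSetoid_or_odd_nSetoid with ⟨-, h⟩ | ⟨-, h⟩
    exacts [Or.inl h, Or.inr h]
  · rcases h.even_mSetoid_or_odd_nSetoid with ⟨-, h⟩ | ⟨-, h⟩
    exacts [Or.inl ((mSetoid k).symm h), Or.inr ((nSetoid k).symm h)]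

def IsBlockConstant {S T : Type*} (k : ℕ) (g : Fin (2 * k) → S × T) : Prop :=
  (∀ i j, (mSetoid k).r i j → (g i).1 = (g j).1) ∧
    (∀ i j, (nSetoid k).r i j → (g i).2 = (g j).2)

variable {S T : Type*}

theorem IsBlockConstant.apply_eq_of_cycleSucc {g g' : Fin (2 * k) → S × T}
    (hg : IsBlockConstant k g) (hg' : IsBlockConstant k g') {w u v : Fin (2 * k)}
    (hwu : CycleSucc w u) (huv : CycleSucc u v) (hw : g w = g' w) (hv : g v = g' v) :
    g u = g' u := by
  rcases hwu.even_mSetoid_or_odd_nSetoid with ⟨hwe, hwu'⟩ | ⟨hwo, hwu'⟩ <;>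
    rcases huv.even_mSetoid_or_odd_nSetoid with ⟨hue, huv'⟩ | ⟨huo, huv'⟩
  · rw [Nat.even_iff] at hwe hue; unfold CycleSucc at hwu; omega
  · refine Prod.ext ?_ ?_
    · rw [← hg.1 w u hwu', ← hg'.1 w u hwu', hw]
    · rw [hg.2 u v huv', hg'.2 u v huv', hv]
  · refine Prod.ext ?_ ?_
    · rw [hg.1 u v huv', hg'.1 u v huv', hv]
    · rw [← hg.2 w u hwu', ← hg'.2 w u hwu', hw]
  · rw [Nat.odd_iff] at hwo huo; unfold CycleSucc at hwu; omega

theorem IsBlockConstant.eq_of_eqOn_compl {g g' : Fin (2 * k) → S × T}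
    (hg : IsBlockConstant k g) (hg' : IsBlockConstant k g') {Q : Finset (Fin (2 * k))}
    (hQ : ∀ q ∈ Q, ∀ v, (CycleSucc q v ∨ CycleSucc v q) → v ∉ Q) (h : ∀ i ∉ Q, g i = g' i) :
    g = g' := by
  funext u
  by_cases hu : u ∈ Q
  · obtain ⟨w, hw⟩ := exists_cycleSucc_to u
    obtain ⟨v, hv⟩ := exists_cycleSucc u
    exact hg.apply_eq_of_cycleSucc hg' hw hv (h w (hQ u hu w (Or.inr hw)))
      (h v (hQ u hu v (Or.inl hv)))
  · exact h u hu

theorem IsBlockConstant.eq_of_eqOn_compl_pair {g g' : Fin (2 * k) → S × T}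
    (hg : IsBlockConstant k g) (hg' : IsBlockConstant k g') {b d : Fin (2 * k)}
    (hb : 0 < b.val) (hbd : b.val + 1 < d.val) (h : ∀ i ∉ ({b, d} : Finset _), g i = g' i) :
    g = g' := by
  refine hg.eq_of_eqOn_compl hg' (fun q hq v hv => ?_) h
  have := d.isLt
  simp only [CycleSucc, mem_insert, mem_singleton, Fin.ext_iff] at hq hv ⊢
  omega

end Cycle

/-- The time at which the sweep reaches edge `x` of the cycle `0, 1, …, N - 1, 0`: the arcs `(a, b)`
and `(c, d)` are swept upward from `a` and `c`, the arcs `(b, c)` and `(d, a)` downward from `c` and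
`a`, one arc after the other. -/
def sweepTime (N a b c d x : ℕ) : ℕ :=
  if x < a then 3 * N + (a - x)
  else if x < b then x - a
  else if x < c then N + (c - x)
  else if x < d then 2 * N + (x - c)
  else 3 * N + (a + N - x)

section Sweep

variable {N : ℕ} {a b c d : Fin N}

theorem sweepTime_injOn (hab : a < b) (hbc : b < c) (hcd : c < d) :
    Set.InjOn (fun x : Fin N => sweepTime N a b c d x) ({a, b, c, d}ᶜ : Finset (Fin N)) := by
  intro x hx y hy hxy
  simp only [coe_compl, coe_insert, coe_singleton, Set.mem_compl_iff, Set.mem_insert_iff,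
    Set.mem_singleton_iff, not_or, Fin.ext_iff] at hx hy
  rw [Fin.lt_def] at hab hbc hcd
  have := x.isLt; have := y.isLt; have := d.isLt
  simp only [sweepTime] at hxy
  ext; split_ifs at hxy <;> omega

theorem exists_cycleSucc_earlier (hab : a < b) (hbc : b < c) (hcd : c < d) {u : Fin N}
    (hu : u ∈ ({a, b, c, d}ᶜ : Finset (Fin N))) :
    ∃ v, (CycleSucc u v ∨ CycleSucc v u) ∧ (v ∈ ({a, c} : Finset (Fin N)) ∨
      (v ∈ ({a, b, c, d}ᶜ : Finset (Fin N)) ∧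
        sweepTime N a b c d v < sweepTime N a b c d u)) := by
  simp only [mem_compl, mem_insert, mem_singleton, not_or, Fin.ext_iff] at hu ⊢
  rw [Fin.lt_def] at hab hbc hcd
  have := u.isLt; have := d.isLt
  by_cases hlast : u.val + 1 = N
  · refine ⟨⟨0, by omega⟩, Or.inl (Or.inr ⟨hlast, rfl⟩), ?_⟩
    simp only [sweepTime]; split_ifs <;> omega
  by_cases hback : (a.val < u.val ∧ u.val < b.val) ∨ (c.val < u.val ∧ u.val < d.val)
  · refine ⟨⟨u.val - 1, by omega⟩, Or.inr (Or.inl (by simp only; omega)), ?_⟩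
    simp only [sweepTime]; split_ifs <;> omega
  · refine ⟨⟨u.val + 1, by omega⟩, Or.inl (Or.inl rfl), ?_⟩
    simp only [sweepTime]; split_ifs <;> omega

end Sweep

section Crossing

variable {k : ℕ} {S T : Type*} {r : S × T → S × T → Prop} {σ : Fin (2 * k) → Fin (2 * k)}
  {A : Finset (Fin (2 * k) → S × T)} {u v : Fin (2 * k)}

theorem boundedChoice_sweep [Finite S] [Finite T] {B : ℕ}
    (hB : ∀ P a, {q | r P (a, q)}.ncard ≤ B) (hB' : ∀ P q, {a | r P (a, q)}.ncard ≤ B)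
    (hσ : Function.Involutive σ) (hA : ∀ g ∈ A, IsBlockConstant k g ∧ ∀ x, r (g x) (g (σ x)))
    {D E : Finset (Fin (2 * k))} {rank : Fin (2 * k) → ℕ} (hσE : ∀ u ∈ E, σ u ∈ E)
    (hu : u ∈ E) (huv : CycleSucc u v ∨ CycleSucc v u) (hv : v ∈ D ∨ (v ∈ E ∧ rank v < rank u)) :
    BoundedChoice A (D ∪ {w ∈ E | rank w < rank u}) u
      (if rank (σ u) < rank u then B else Nat.card S + Nat.card T) := by
  have hvK : v ∈ D ∪ {w ∈ E | rank w < rank u} := by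
    rcases hv with hv | hv
    exacts [mem_union_left _ hv, mem_union_right _ (mem_filter.mpr hv)]
  split_ifs with hσu
  · have hσuK : σ u ∈ D ∪ {w ∈ E | rank w < rank u} :=
      mem_union_right _ (mem_filter.mpr ⟨hσE u hu, hσu⟩)
    have hr : ∀ g ∈ A, r (g (σ u)) (g u) := fun g hg => by
      simpa only [hσ u] using (hA g hg).2 (σ u)
    rcases mSetoid_or_nSetoid_of_cycleSucc huv with h | h
    · exact BoundedChoice.of_fst_eq_of_rel hB hvK hσuK (fun g hg => (hA g hg).1.1 u v h) hr
    · exact BoundedChoice.of_snd_eq_of_rel hB' hvK hσuK (fun g hg => (hA g hg).1.2 u v h) hr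
  · rcases mSetoid_or_nSetoid_of_cycleSucc huv with h | h
    · exact (BoundedChoice.of_fst_eq hvK fun g hg => (hA g hg).1.1 u v h).mono subset_rfl
        (Nat.le_add_left _ _)
    · exact (BoundedChoice.of_snd_eq hvK fun g hg => (hA g hg).1.2 u v h).mono subset_rfl
        (Nat.le_add_right _ _)

theorem ncard_isBlockConstant_le_of_crossing [Fintype S] [Fintype T] {B : ℕ}
    (hB : ∀ P a, {q | r P (a, q)}.ncard ≤ B) (hB' : ∀ P q, {a | r P (a, q)}.ncard ≤ B)
    (hσ : Function.Involutive σ) (hσfix : ∀ x, σ x ≠ x) {c1 c2 c3 c4 : Fin (2 * k)}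
    (h12 : c1 < c2) (h23 : c2 < c3) (h34 : c3 < c4) (h13 : σ c1 = c3) (h24 : σ c2 = c4) :
    {g : Fin (2 * k) → S × T | IsBlockConstant k g ∧ ∀ x, r (g x) (g (σ x))}.ncard ≤
      (B * (Nat.card S + Nat.card T)) ^ (k - 2) *
        {x : (S × T) × (S × T) | r x.1 x.2}.ncard := by
  classical
  set A : Finset (Fin (2 * k) → S × T) := {g | IsBlockConstant k g ∧ ∀ x, r (g x) (g (σ x))}
  have hA : ∀ g ∈ A, IsBlockConstant k g ∧ ∀ x, r (g x) (g (σ x)) :=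
    fun g hg => (mem_filter.mp hg).2
  set E : Finset (Fin (2 * k)) := {c1, c2, c3, c4}ᶜ
  set rank : Fin (2 * k) → ℕ := fun x => sweepTime (2 * k) c1 c2 c3 c4 x
  have hσE : ∀ u ∈ E, σ u ∈ E := by
    have h31 : σ c3 = c1 := h13 ▸ hσ c1
    have h42 : σ c4 = c2 := h24 ▸ hσ c2
    have hσQ : ∀ q ∈ ({c1, c2, c3, c4} : Finset _), σ q ∈ ({c1, c2, c3, c4} : Finset _) := by
      simp [h13, h24, h31, h42]
    exact fun u hu => mem_compl.mpr fun hσu => mem_compl.mp hu (hσ u ▸ hσQ _ hσu)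
  have hrank : Set.InjOn rank E := sweepTime_injOn h12 h23 h34
  have hE : #E / 2 = k - 2 := by
    rw [Fin.lt_def] at h12 h23 h34
    rw [card_compl, Fintype.card_fin, card_insert_of_notMem, card_insert_of_notMem, card_pair]
      <;> simp [Fin.ext_iff] <;> omega
  have hinj : Set.InjOn ({c1, c3} ∪ E : Finset (Fin (2 * k))).restrict
      (A : Set (Fin (2 * k) → S × T)) := by
    rw [Fin.lt_def] at h12 h23 h34
    exact fun g hg g' hg' h => (hA g hg).1.eq_of_eqOn_compl_pair (hA g' hg').1
      (b := c2) (d := c4) (by omega) (by omega)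
      fun i hi => congrFun h ⟨i, by simp [E] at hi ⊢; tauto⟩
  calc _ = #A := by rw [← Set.ncard_coe_finset, coe_filter]; simp
    _ = #(A.image ({c1, c3} ∪ E : Finset _).restrict) := (card_image_of_injOn hinj).symm
    _ ≤ (∏ u ∈ E, if rank (σ u) < rank u then B else Nat.card S + Nat.card T) *
        #(A.image ({c1, c3} : Finset _).restrict) :=
      card_image_restrict_union_le_prod hrank fun u hu => by
        obtain ⟨v, huv, hv⟩ := exists_cycleSucc_earlier h12 h23 h34 hu
        exact boundedChoice_sweep hB hB' hσ hA hσE hu huv hv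
    _ ≤ _ := by
      rw [prod_ite_lt_comp_eq_mul_pow hσ hσE fun u hu => hrank.ne (hσE u hu) hu (hσfix u), hE]
      exact Nat.mul_le_mul_left _ <|
        card_image_restrict_pair_le fun g hg => h13 ▸ (hA g hg).2 c1

end Crossing

theorem ncard_le_ncard_isBlockConstant {k : ℕ} {S T : Type*} [Finite S] [Finite T]
    {r : S × T → S × T → Prop} {p : Setoid (Fin (2 * k))} {σ : Fin (2 * k) → Fin (2 * k)}
    (hσ : ∀ x, p.r x (σ x)) :
    {fp : (Fin (2 * k) → S) × (Fin (2 * k) → T) |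
        (∀ i j, (mSetoid k).r i j → fp.1 i = fp.1 j) ∧
        (∀ i j, (nSetoid k).r i j → fp.2 i = fp.2 j) ∧
        (∀ i j, (r (fp.1 i, fp.2 i) (fp.1 j, fp.2 j) ↔ p.r i j))}.ncard ≤
      {g : Fin (2 * k) → S × T | IsBlockConstant k g ∧ ∀ x, r (g x) (g (σ x))}.ncard := by
  refine Set.ncard_le_ncard_of_injOn (fun fp e => (fp.1 e, fp.2 e))
    (fun fp ⟨hm, hn, hr⟩ => ⟨⟨hm, hn⟩, fun x => (hr x (σ x)).mpr (hσ x)⟩)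
    (fun fp _ fp' _ h => ?_) (Set.toFinite _)
  simp only [funext_iff, Prod.mk.injEq] at h
  exact Prod.ext (funext fun e => (h e).1) (funext fun e => (h e).2)

theorem tendsto_div_pow_of_le {a s t M : ℕ → ℕ} {κ μ : ℝ} {B j : ℕ}
    (hs : Tendsto (fun n => (s n : ℝ) / n) atTop (𝓝 κ))
    (ht : Tendsto (fun n => (t n : ℝ) / n) atTop (𝓝 μ))
    (hM : Tendsto (fun n => (M n : ℝ) / (n : ℝ) ^ 2) atTop (𝓝 0))
    (ha : ∀ n, a n ≤ (B * (s n + t n)) ^ j * (s n * M n)) :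
    Tendsto (fun n => (a n : ℝ) / (n : ℝ) ^ (j + 3)) atTop (𝓝 0) := by
  have hlim : Tendsto (fun n => (B * ((s n : ℝ) / n + (t n : ℝ) / n)) ^ j * ((s n : ℝ) / n) *
      ((M n : ℝ) / (n : ℝ) ^ 2)) atTop (𝓝 0) := by
    simpa using (((tendsto_const_nhds.mul (hs.add ht)).pow j).mul hs).mul hM
  refine squeeze_zero' (Eventually.of_forall fun n => by positivity) ?_ hlim
  filter_upwards [eventually_gt_atTop 0] with n hn
  have hn' : (0 : ℝ) < n := by exact_mod_cast hn
  calc (a n : ℝ) / (n : ℝ) ^ (j + 3)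
      ≤ ((B * (s n + t n)) ^ j * (s n * M n) : ℕ) / (n : ℝ) ^ (j + 3) := by
        gcongr; exact_mod_cast ha n
    _ = _ := by rw [← add_div, mul_div_assoc' (B : ℝ), div_pow]; push_cast; field_simp; ring

theorem crossing_pair_partition_count_small_general (k : ℕ) (κ μ : ℝ)
    (s t : ℕ → ℕ) (R : ∀ n, Setoid (Fin (s n) × Fin (t n)))
    (hs : Tendsto (fun n => (s n : ℝ) / n) atTop (nhds κ))
    (ht : Tendsto (fun n => (t n : ℝ) / n) atTop (nhds μ))
    -- (MP1)
    (hMP1 : Tendsto (fun n =>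
        ((Finset.univ.sup (fun a : Fin (s n) =>
            {x : Fin (t n) × Fin (s n) × Fin (t n) |
              (R n).r (a, x.1) (x.2.1, x.2.2)}.ncard) : ℕ) : ℝ) / (n : ℝ) ^ 2)
        atTop (nhds 0))
    -- (MP2)
    (B : ℕ)
    (hMP2 : ∀ n (a : Fin (s n)) (q : Fin (t n)) (a' : Fin (s n)),
        {q' : Fin (t n) | (R n).r (a, q) (a', q')}.ncard ≤ B)
    (hMP2' : ∀ n (a : Fin (s n)) (q q' : Fin (t n)),
        {a' : Fin (s n) | (R n).r (a, q) (a', q')}.ncard ≤ B)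
    (p : Setoid (Fin (2 * k))) (hpair : IsPairPartition p)
    (hcross : ¬ IsNoncrossing p) :
    Tendsto (fun n =>
      ({fp : (Fin (2 * k) → Fin (s n)) × (Fin (2 * k) → Fin (t n)) |
          (∀ i j, (mSetoid k).r i j → fp.1 i = fp.1 j) ∧
          (∀ i j, (nSetoid k).r i j → fp.2 i = fp.2 j) ∧
          (∀ i j, ((R n).r (fp.1 i, fp.2 i) (fp.1 j, fp.2 j) ↔ p.r i j))}.ncard : ℝ)
        / (n : ℝ) ^ (k + 1)) atTop (nhds 0) := by
  obtain ⟨σ, hσ, hσfix, hpσ, hσp⟩ := hpair.exists_involutive_partner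
  obtain ⟨c1, c2, c3, c4, h12, h23, h34, h13, h24, -⟩ := not_not.mp hcross
  have hσ13 : σ c1 = c3 := ((hσp _ _ h13).resolve_left (h12.trans h23).ne').symm
  have hσ24 : σ c2 = c4 := ((hσp _ _ h24).resolve_left (h23.trans h34).ne').symm
  have hk : k + 1 = k - 2 + 3 := by
    rw [Fin.lt_def] at h12 h23 h34; have := c4.isLt; omega
  rw [hk]
  refine tendsto_div_pow_of_le (B := B) hs ht hMP1 fun n =>
    (ncard_le_ncard_isBlockConstant hpσ).trans ?_
  have hcore := ncard_isBlockConstant_le_of_crossing (fun P a' => hMP2 n P.1 P.2 a')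
    (fun P q' => hMP2' n P.1 P.2 q') hσ hσfix h12 h23 h34 hσ13 hσ24
  have hrel := ncard_rel_le_card_mul_sup (R n).r
  simp only [Nat.card_eq_fintype_card, Fintype.card_fin] at hcore hrel
  exact hcore.trans (Nat.mul_le_mul_left _ hrel)

/-- If `p` is a crossing pair partition of `{1,…,2k}`, then under (MP1), (MP2), (MP3),
`#S_n(p) = o(n^{k+1})`, where `S_n(p)` is the set of pairs `(φ,ψ)` with `φ` constant on
blocks of `m`, `ψ` constant on blocks of `n`, and
`(φ(i),ψ(i)) ~_n (φ(j),ψ(j)) ↔ i ~_p j`. -/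
theorem crossing_pair_partition_count_small (k : ℕ) (hk : 1 ≤ k) (κ μ : ℝ)
    (hκ : 0 < κ) (hμ : 0 < μ)
    (s t : ℕ → ℕ) (R : ∀ n, Setoid (Fin (s n) × Fin (t n)))
    (hs : Tendsto (fun n => (s n : ℝ) / n) atTop (nhds κ))
    (ht : Tendsto (fun n => (t n : ℝ) / n) atTop (nhds μ))
    -- (MP1)
    (hMP1 : Tendsto (fun n =>
        ((Finset.univ.sup (fun a : Fin (s n) =>
            {x : Fin (t n) × Fin (s n) × Fin (t n) |
              (R n).r (a, x.1) (x.2.1, x.2.2)}.ncard) : ℕ) : ℝ) / (n : ℝ) ^ 2)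
        atTop (nhds 0))
    -- (MP2)
    (B : ℕ)
    (hMP2 : ∀ n (a : Fin (s n)) (q : Fin (t n)) (a' : Fin (s n)),
        {q' : Fin (t n) | (R n).r (a, q) (a', q')}.ncard ≤ B)
    (hMP2' : ∀ n (a : Fin (s n)) (q q' : Fin (t n)),
        {a' : Fin (s n) | (R n).r (a, q) (a', q')}.ncard ≤ B)
    -- (MP3)
    (hMP3 : Tendsto (fun n =>
        ({x : Fin (s n) × Fin (t n) × Fin (t n) |
            x.2.1 ≠ x.2.2 ∧ (R n).r (x.1, x.2.1) (x.1, x.2.2)}.ncard : ℝ) / (n : ℝ) ^ 2)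
        atTop (nhds 0))
    (hMP3' : Tendsto (fun n =>
        ({x : Fin (s n) × Fin (s n) × Fin (t n) |
            x.1 ≠ x.2.1 ∧ (R n).r (x.1, x.2.2) (x.2.1, x.2.2)}.ncard : ℝ) / (n : ℝ) ^ 2)
        atTop (nhds 0))
    (p : Setoid (Fin (2 * k))) (hpair : IsPairPartition p)
    (hcross : ¬ IsNoncrossing p) :
    Tendsto (fun n =>
      ({fp : (Fin (2 * k) → Fin (s n)) × (Fin (2 * k) → Fin (t n)) |
          (∀ i j, (mSetoid k).r i j → fp.1 i = fp.1 j) ∧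
          (∀ i j, (nSetoid k).r i j → fp.2 i = fp.2 j) ∧
          (∀ i j, ((R n).r (fp.1 i, fp.2 i) (fp.1 j, fp.2 j) ↔ p.r i j))}.ncard : ℝ)
        / (n : ℝ) ^ (k + 1)) atTop (nhds 0) :=
  crossing_pair_partition_count_small_general k κ μ s t R hs ht hMP1 B hMP2 hMP2' p hpair hcross
end
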